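/- arXiv:2012.07607 — 10 statements merged into one kernel-verified Lean document; each statement's English description precedes it below -/
import Mathlib

section
/- Let ρ : ℝ≥0 → ℝ≥0 be continuous, non-decreasing and positive definite (ρ(0)=0 and ρ(s)>0 for s>0), and let f : ℝ≥0 → ℝ≥0 be quasi-uniformly continuous with ∫₀^∞ ρ(f(t)) dt < ∞. Then f(t) → 0 as t → ∞. -/
/-!
If `f` does not tend to `0`, there are arbitrarily late times `t` with `f t ≥ ε`. Quasi-uniform
continuity limits how fast `f` can rise, so `f ≥ ε / 2` on a whole window `[t - δ, t]`, and the
integral of `ρ ∘ f` over that window is at least `δ ρ(ε / 2) > 0`. But integrability of `ρ ∘ f`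
forces its integrals over windows of fixed length to tend to `0`.
-/

open MeasureTheory Filter Set Topology

theorem tendsto_intervalIntegral_sub_atTop {g : ℝ → ℝ} {a : ℝ} (hg : IntegrableOn g (Ici a))
    (δ : ℝ) : Tendsto (fun t => ∫ s in (t - δ)..t, g s) atTop (𝓝 0) := by
  have hF : Tendsto (fun b => ∫ s in a..b, g s) atTop (𝓝 (∫ s in Ioi a, g s)) :=
    intervalIntegral_tendsto_integral_Ioi a (hg.mono_set Ioi_subset_Ici_self) tendsto_id
  have hdiff := hF.sub (hF.comp (tendsto_atTop_add_const_right _ (-δ) tendsto_id))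
  simp only [Function.comp_def, id, ← sub_eq_add_neg, sub_self] at hdiff
  have hab {b : ℝ} (hb : a ≤ b) : IntervalIntegrable g volume a b :=
    (hg.mono_set (by simp [uIcc_of_le hb, Icc_subset_Ici_self])).intervalIntegrable
  refine hdiff.congr' ?_
  filter_upwards [eventually_ge_atTop (a + |δ|)] with t ht
  exact intervalIntegral.integral_interval_sub_left
    (hab (by linarith [abs_nonneg δ])) (hab (by linarith [le_abs_self δ]))

def QuasiUniformlyContinuous (f : ℝ → ℝ) : Prop :=
  ∀ ε > (0:ℝ), ∃ δ > (0:ℝ), ∀ t₀ t : ℝ, 0 ≤ t₀ → t₀ ≤ t → t ≤ t₀ + δ → f t - f t₀ < ε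

theorem QuasiUniformlyContinuous.exists_mul_le_intervalIntegral {ρ f : ℝ → ℝ}
    (hf : QuasiUniformlyContinuous f) (hfnn : ∀ t ≥ (0:ℝ), 0 ≤ f t)
    (hρmono : MonotoneOn ρ (Ici 0)) (hint : IntegrableOn (fun t => ρ (f t)) (Ici 0))
    {ε : ℝ} (hε : 0 < ε) :
    ∃ δ > 0, ∀ t ≥ δ, ε ≤ f t → δ * ρ (ε / 2) ≤ ∫ s in (t - δ)..t, ρ (f s) := by
  obtain ⟨δ, hδ, hrise⟩ := hf (ε / 2) (half_pos hε)
  refine ⟨δ, hδ, fun t ht hft => ?_⟩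
  have hwindow : ∀ s ∈ Icc (t - δ) t, ρ (ε / 2) ≤ ρ (f s) := by
    rintro s ⟨hs, hst⟩
    have hs0 : 0 ≤ s := by linarith
    have hrise_s := hrise s t hs0 hst (by linarith)
    exact hρmono (half_pos hε).le (hfnn s hs0) (by linarith)
  have hintegrable : IntervalIntegrable (fun s => ρ (f s)) volume (t - δ) t :=
    (hint.mono_set <| by
      rw [uIcc_of_le (by linarith)]; exact (Icc_subset_Ici_iff (by linarith)).2 (by linarith))
      |>.intervalIntegrable
  calc δ * ρ (ε / 2) = ∫ _ in (t - δ)..t, ρ (ε / 2) := by simp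
    _ ≤ ∫ s in (t - δ)..t, ρ (f s) :=
      intervalIntegral.integral_mono_on (by linarith) intervalIntegrable_const hintegrable hwindow

theorem stmt3_general (ρ f : ℝ → ℝ)
    (hρmono : MonotoneOn ρ (Ici 0))
    (hρpos : ∀ s > (0:ℝ), 0 < ρ s)
    (hfnn : ∀ t ≥ (0:ℝ), 0 ≤ f t)
    (hquc : ∀ ε > (0:ℝ), ∃ δ > (0:ℝ), ∀ t₀ t : ℝ, 0 ≤ t₀ → t₀ ≤ t → t ≤ t₀ + δ →
      f t - f t₀ < ε)
    (hint : IntegrableOn (fun t => ρ (f t)) (Ici 0)) :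
    Tendsto f atTop (nhds 0) := by
  refine tendsto_order.2 ⟨fun a ha => ?_, fun ε hε => ?_⟩
  · filter_upwards [eventually_ge_atTop 0] with t ht using ha.trans_le (hfnn t ht)
  obtain ⟨δ, hδ, hlower⟩ :=
    QuasiUniformlyContinuous.exists_mul_le_intervalIntegral hquc hfnn hρmono hint hε
  have hsmall := (tendsto_intervalIntegral_sub_atTop hint δ).eventually
    (gt_mem_nhds (mul_pos hδ (hρpos _ (half_pos hε))))
  filter_upwards [hsmall, eventually_ge_atTop δ] with t hsmall_t ht
  by_contra! hft
  exact (hlower t ht hft).not_gt hsmall_t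

/-- Lemma 3, case: `ρ` continuous, non-decreasing and positive definite, `f` nonnegative and
quasi-uniformly continuous, with `∫₀^∞ ρ(f t) dt < ∞`.  Then `f(t) → 0` as `t → ∞`. -/
theorem stmt3 (ρ f : ℝ → ℝ)
    (hρc : ContinuousOn ρ (Ici 0)) (hρmono : MonotoneOn ρ (Ici 0))
    (hρ0 : ρ 0 = 0) (hρpos : ∀ s > (0:ℝ), 0 < ρ s)
    (hρnn : ∀ s ≥ (0:ℝ), 0 ≤ ρ s)
    (hfnn : ∀ t ≥ (0:ℝ), 0 ≤ f t)
    (hquc : ∀ ε > (0:ℝ), ∃ δ > (0:ℝ), ∀ t₀ t : ℝ, 0 ≤ t₀ → t₀ ≤ t → t ≤ t₀ + δ →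
      f t - f t₀ < ε)
    (hint : IntegrableOn (fun t => ρ (f t)) (Ici 0)) :
    Tendsto f atTop (nhds 0) :=
  stmt3_general ρ f hρmono hρpos hfnn hquc hint
end

section
/- Let ρ : ℝ≥0 → ℝ≥0 be continuous, non-decreasing and positive definite, and let f : ℝ≥0 → ℝ≥0 be such that -f is quasi-uniformly continuous and ∫₀^∞ ρ(f(t)) dt < ∞. Then f(t) → 0 as t → ∞. -/
/-!
If `f t₀ ≥ ε` with `t₀ ≥ 0`, the one-sided continuity of `f` keeps `f ≥ ε / 2` on a window
`[t₀, t₀ + δ]` of fixed length, so `∫ ρ ∘ f` over that window is at least `δ ρ(ε / 2) > 0`.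
Integrability forces the integrals over windows of length `δ` to tend to `0`, so eventually
`f < ε`; together with `f ≥ 0` this gives `f → 0`.
-/

open MeasureTheory Filter Set Topology

theorem tendsto_intervalIntegral_add_const_atTop_zero {E : Type*} [NormedAddCommGroup E]
    [NormedSpace ℝ E] {g : ℝ → E} {a : ℝ} (hg : IntegrableOn g (Ioi a)) (δ : ℝ) :
    Tendsto (fun t => ∫ x in t..t + δ, g x) atTop (𝓝 0) := by
  have hshift : Tendsto (fun t : ℝ => t + δ) atTop atTop :=
    tendsto_atTop_add_const_right _ δ tendsto_id
  have hlim := (intervalIntegral_tendsto_integral_Ioi a hg hshift).sub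
    (intervalIntegral_tendsto_integral_Ioi a hg tendsto_id)
  rw [sub_self] at hlim
  have hii : ∀ b ≥ a, IntervalIntegrable g volume a b := fun b hb =>
    (intervalIntegrable_iff_integrableOn_Ioc_of_le hb).2 (hg.mono_set Ioc_subset_Ioi_self)
  refine hlim.congr' ?_
  filter_upwards [eventually_ge_atTop a, hshift.eventually (eventually_ge_atTop a)] with t ht htδ
  exact intervalIntegral.integral_interval_sub_left (hii _ htδ) (hii _ ht)

theorem mul_le_intervalIntegral_comp_of_le {ρ f : ℝ → ℝ} (hρ : MonotoneOn ρ (Ici 0))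
    {t δ c : ℝ} (hδ : 0 ≤ δ) (hc : 0 ≤ c)
    (hint : IntervalIntegrable (fun s => ρ (f s)) volume t (t + δ))
    (hf : ∀ s ∈ Icc t (t + δ), c ≤ f s) :
    δ * ρ c ≤ ∫ s in t..t + δ, ρ (f s) := by
  calc δ * ρ c = ∫ _ in t..t + δ, ρ c := by simp
    _ ≤ ∫ s in t..t + δ, ρ (f s) :=
      intervalIntegral.integral_mono_on (by linarith) intervalIntegrable_const hint
        fun s hs => hρ hc (hc.trans (hf s hs)) (hf s hs)

theorem stmt5_general (ρ f : ℝ → ℝ)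
    (hρmono : MonotoneOn ρ (Ici 0))
    (hρpos : ∀ s > (0:ℝ), 0 < ρ s)
    (hfnn : ∀ t ≥ (0:ℝ), 0 ≤ f t)
    (hquc : ∀ ε > (0:ℝ), ∃ δ > (0:ℝ), ∀ t₀ t : ℝ, 0 ≤ t₀ → t₀ ≤ t → t ≤ t₀ + δ →
      (-f) t - (-f) t₀ < ε)
    (hint : IntegrableOn (fun t => ρ (f t)) (Ici 0)) :
    Tendsto f atTop (nhds 0) := by
  refine tendsto_order.2 ⟨fun a ha => ?_, fun ε hε => ?_⟩
  · filter_upwards [eventually_ge_atTop 0] with t ht using ha.trans_le (hfnn t ht)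
  obtain ⟨δ, hδ, hδf⟩ := hquc (ε / 2) (half_pos hε)
  have hsmall := (tendsto_intervalIntegral_add_const_atTop_zero
    (hint.mono_set Ioi_subset_Ici_self) δ).eventually
      (gt_mem_nhds (mul_pos hδ (hρpos _ (half_pos hε))))
  filter_upwards [hsmall, eventually_ge_atTop 0] with t hsmall ht
  by_contra! hft
  have hlow : ∀ s ∈ Icc t (t + δ), ε / 2 ≤ f s := fun s hs => by
    have := hδf t s ht hs.1 hs.2
    simp only [Pi.neg_apply] at this
    linarith
  have hii : IntervalIntegrable (fun s => ρ (f s)) volume t (t + δ) :=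
    (intervalIntegrable_iff_integrableOn_Icc_of_le (by linarith)).2
      (hint.mono_set fun s hs => ht.trans hs.1)
  exact hsmall.not_ge (mul_le_intervalIntegral_comp_of_le hρmono hδ.le (half_pos hε).le hii hlow)

/-- Lemma 3, case: `ρ` continuous, non-decreasing and positive definite, `-f`
quasi-uniformly continuous (`f` nonnegative), with `∫₀^∞ ρ(f t) dt < ∞`.
Then `f(t) → 0` as `t → ∞`. -/
theorem stmt5 (ρ f : ℝ → ℝ)
    (hρc : ContinuousOn ρ (Ici 0)) (hρmono : MonotoneOn ρ (Ici 0))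
    (hρ0 : ρ 0 = 0) (hρpos : ∀ s > (0:ℝ), 0 < ρ s)
    (hρnn : ∀ s ≥ (0:ℝ), 0 ≤ ρ s)
    (hfnn : ∀ t ≥ (0:ℝ), 0 ≤ f t)
    (hquc : ∀ ε > (0:ℝ), ∃ δ > (0:ℝ), ∀ t₀ t : ℝ, 0 ≤ t₀ → t₀ ≤ t → t ≤ t₀ + δ →
      (-f) t - (-f) t₀ < ε)
    (hint : IntegrableOn (fun t => ρ (f t)) (Ici 0)) :
    Tendsto f atTop (nhds 0) :=
  stmt5_general ρ f hρmono hρpos hfnn hquc hint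
end

section
/- Let ρ : ℝ≥0 → ℝ≥0 be continuous and positive definite, and let f : ℝ≥0 → ℝ≥0 be bounded with -f quasi-uniformly continuous and ∫₀^∞ ρ(f(t)) dt < ∞. Then f(t) → 0 as t → ∞. -/
/-!
If `f` does not tend to `0`, then `f t ≥ ε` for arbitrarily large `t`. Since `f` can only drop by
less than `ε / 2` within time `δ`, it then stays in `[ε / 2, C]` on `[t, t + δ]`, where the
continuous positive function `ρ` is bounded below by some `m > 0`; so the integral of `ρ ∘ f` over
such windows is at least `m δ`. This contradicts the integrability of `ρ ∘ f`, which forces the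
integrals over the windows `[t, t + δ]` to tend to `0`.
-/

open MeasureTheory Filter Set Topology

theorem tendsto_intervalIntegral_add_of_integrableOn_Ioi {E : Type*} [NormedAddCommGroup E]
    [NormedSpace ℝ E] {μ : Measure ℝ} {g : ℝ → E} {a : ℝ} (hg : IntegrableOn g (Ioi a) μ)
    (δ : ℝ) : Tendsto (fun t => ∫ s in t..t + δ, g s ∂μ) atTop (𝓝 0) := by
  have hlim : Tendsto (fun t => ∫ s in a..t, g s ∂μ) atTop (𝓝 (∫ s in Ioi a, g s ∂μ)) :=
    intervalIntegral_tendsto_integral_Ioi a hg tendsto_id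
  have hshift : Tendsto (fun t => ∫ s in a..t + δ, g s ∂μ) atTop (𝓝 (∫ s in Ioi a, g s ∂μ)) :=
    intervalIntegral_tendsto_integral_Ioi a hg (tendsto_atTop_add_const_right _ δ tendsto_id)
  have hgi : ∀ b ≥ a, IntervalIntegrable g μ a b := fun b hb =>
    (intervalIntegrable_iff_integrableOn_Ioc_of_le hb).2 (hg.mono_set Ioc_subset_Ioi_self)
  rw [← sub_self (∫ x in Ioi a, g x ∂μ)]
  refine (hshift.sub hlim).congr' ?_
  filter_upwards [eventually_ge_atTop a, eventually_ge_atTop (a - δ)] with t ht htδ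
  exact intervalIntegral.integral_interval_sub_left (hgi _ (by linarith)) (hgi t ht)

theorem stmt6_general (ρ f : ℝ → ℝ)
    (hρc : ContinuousOn ρ (Ici 0))
    (hρpos : ∀ s > (0:ℝ), 0 < ρ s)
    (hfnn : ∀ t ≥ (0:ℝ), 0 ≤ f t)
    (hfbdd : ∃ C : ℝ, ∀ t ≥ (0:ℝ), f t ≤ C)
    (hquc : ∀ ε > (0:ℝ), ∃ δ > (0:ℝ), ∀ t₀ t : ℝ, 0 ≤ t₀ → t₀ ≤ t → t ≤ t₀ + δ →
      (-f) t - (-f) t₀ < ε)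
    (hint : IntegrableOn (fun t => ρ (f t)) (Ici 0)) :
    Tendsto f atTop (nhds 0) := by
  obtain ⟨C, hC⟩ := hfbdd
  refine tendsto_order.2 ⟨fun a ha => (eventually_ge_atTop 0).mono fun t ht =>
    ha.trans_le (hfnn t ht), fun ε hε => ?_⟩
  by_contra hfreq
  obtain ⟨δ, hδ, hdrop⟩ := hquc (ε / 2) (half_pos hε)
  obtain ⟨m, hm, hρm⟩ : ∃ m, 0 < m ∧ ∀ s ∈ Icc (ε / 2) C, m ≤ ρ s :=
    isCompact_Icc.exists_forall_le' (hρc.mono fun s hs => mem_Ici.2 (by linarith [hs.1]))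
      fun s hs => hρpos s (by linarith [hs.1])
  have hsmall := (tendsto_intervalIntegral_add_of_integrableOn_Ioi
    (hint.mono_set Ioi_subset_Ici_self) δ).eventually (gt_mem_nhds (mul_pos hδ hm))
  obtain ⟨t, hft, hIt, ht⟩ := ((not_eventually.1 hfreq).and_eventually
    (hsmall.and (eventually_ge_atTop 0))).exists
  have hwindow : ∀ s ∈ Icc t (t + δ), f s ∈ Icc (ε / 2) C := fun s hs => by
    have := hdrop t s ht hs.1 hs.2
    simp only [Pi.neg_apply] at this
    exact ⟨by linarith [not_lt.1 hft], hC s (ht.trans hs.1)⟩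
  refine hIt.not_ge ?_
  calc δ * m = ∫ _ in t..t + δ, m := by simp
    _ ≤ ∫ s in t..t + δ, ρ (f s) :=
      intervalIntegral.integral_mono_on (by linarith) intervalIntegrable_const
        ((intervalIntegrable_iff_integrableOn_Icc_of_le (by linarith)).2
          (hint.mono_set fun s hs => ht.trans hs.1))
        fun s hs => hρm _ (hwindow s hs)

/-- Lemma 3, case: `ρ` continuous and positive definite, `f` nonnegative and bounded with
`-f` quasi-uniformly continuous, with `∫₀^∞ ρ(f t) dt < ∞`.  Then `f(t) → 0`. -/
theorem stmt6 (ρ f : ℝ → ℝ)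
    (hρc : ContinuousOn ρ (Ici 0))
    (hρ0 : ρ 0 = 0) (hρpos : ∀ s > (0:ℝ), 0 < ρ s)
    (hρnn : ∀ s ≥ (0:ℝ), 0 ≤ ρ s)
    (hfnn : ∀ t ≥ (0:ℝ), 0 ≤ f t)
    (hfbdd : ∃ C : ℝ, ∀ t ≥ (0:ℝ), f t ≤ C)
    (hquc : ∀ ε > (0:ℝ), ∃ δ > (0:ℝ), ∀ t₀ t : ℝ, 0 ≤ t₀ → t₀ ≤ t → t ≤ t₀ + δ →
      (-f) t - (-f) t₀ < ε)
    (hint : IntegrableOn (fun t => ρ (f t)) (Ici 0)) :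
    Tendsto f atTop (nhds 0) :=
  stmt6_general ρ f hρc hρpos hfnn hfbdd hquc hint
end

section
/- Every quasi-uniformly continuous function f : ℝ≥0 → ℝ is Lebesgue measurable. -/
/-!
The hypothesis makes `f` upper semicontinuous from the right at every point of `[0, ∞)`.
Hence each sublevel set `{t ≥ 0 | f t < a}` is a right neighbourhood of each of its points,
and such a set is Borel: its points outside its interior are left endpoints of pairwise disjoint
intervals contained in it, hence countably many.
-/

open Set Filter Topology

theorem upperSemicontinuousWithinAt_Ici_of_quasiUniform {f : ℝ → ℝ}
    (hf : ∀ ε > (0:ℝ), ∃ δ > (0:ℝ), ∀ t₀ t : ℝ, 0 ≤ t₀ → t₀ ≤ t → t ≤ t₀ + δ →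
      f t - f t₀ < ε) {x : ℝ} (hx : 0 ≤ x) :
    UpperSemicontinuousWithinAt f (Ici x) x := by
  intro y hy
  obtain ⟨δ, hδ, hδf⟩ := hf (y - f x) (sub_pos.2 hy)
  filter_upwards [Icc_mem_nhdsGE (lt_add_of_pos_right x hδ)] with t ht
  linarith [hδf x t hx ht.1 ht.2]

theorem measurable_domRestrict_of_upperSemicontinuousWithinAt_Ici
    {α β : Type*} [TopologicalSpace α] [LinearOrder α] [OrderTopology α]
    [SecondCountableTopology α] [MeasurableSpace α] [BorelSpace α]
    [TopologicalSpace β] [LinearOrder β] [OrderTopology β]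
    [SecondCountableTopology β] [MeasurableSpace β] [BorelSpace β]
    {f : α → β} {s : Set α} (hs : IsUpperSet s)
    (hf : ∀ x ∈ s, UpperSemicontinuousWithinAt f (Ici x) x) :
    Measurable (s.domRestrict f) := by
  refine measurable_of_Iio fun a ↦ ?_
  have hpre : s.domRestrict f ⁻¹' Iio a = Subtype.val ⁻¹' {x ∈ s | f x < a} := by
    ext x
    simp [domRestrict]
  have hnhds : ∀ x ∈ {x ∈ s | f x < a}, {x ∈ s | f x < a} ∈ 𝓝[>] x := by
    rintro x ⟨hxs, hxa⟩
    have hs_nhds : s ∈ 𝓝[≥] x := mem_of_superset self_mem_nhdsWithin (hs.Ici_subset hxs)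
    exact nhdsWithin_mono x Ioi_subset_Ici_self (inter_mem hs_nhds (hf x hxs a hxa))
  rw [hpre]
  exact (MeasurableSet.of_mem_nhdsGT hnhds).preimage measurable_subtype_coe

/-- Every quasi-uniformly continuous function `f : [0,∞) → ℝ` is Lebesgue measurable. -/
theorem stmt7 (f : ℝ → ℝ)
    (hquc : ∀ ε > (0:ℝ), ∃ δ > (0:ℝ), ∀ t₀ t : ℝ, 0 ≤ t₀ → t₀ ≤ t → t ≤ t₀ + δ →
      f t - f t₀ < ε) :
    Measurable ((Set.Ici (0:ℝ)).restrict f) :=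
  measurable_domRestrict_of_upperSemicontinuousWithinAt_Ici (isUpperSet_Ici 0)
    fun _ hx ↦ upperSemicontinuousWithinAt_Ici_of_quasiUniform hquc hx
end

section
/- Let φ : ℝ≥0 × Ω → Ω be a semiflow on a set Ω contained in ℝⁿ with 0 ∈ Ω, with continuous output map h : Ω → ℝᵏ, h(0) = 0. Suppose there exist a ∈ K∞, V, W : Ω → ℝ≥0 with sup{V(x)+W(x) : x ∈ Ω, |x| ≤ s} < ∞ for all s ≥ 0, and a continuous positive definite ρ : ℝ≥0 → ℝ≥0 such that: a(|h(x)|) ≤ W(x) for all x ∈ Ω; V(φ(t,x)) ≤ V(x) - ∫₀ᵗ ρ(W(φ(s,x))) ds for all x ∈ Ω, t ≥ 0; and t ↦ W(φ(t,x)) is non-increasing for every x ∈ Ω. Then for every ε, R > 0 there exists T(ε,R) > 0 such that |h(φ(t,x₀))| ≤ ε for all x₀ ∈ Ω with |x₀| < R and all t ≥ T(ε,R) (uniform output attractivity). -/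
open MeasureTheory Filter Set

theorem AntitoneOn.intervalIntegrable_comp {f g : ℝ → ℝ} {a b : ℝ} (hab : a ≤ b)
    (hg : AntitoneOn g (Icc a b)) (hf : ContinuousOn f (Icc (g b) (g a))) :
    IntervalIntegrable (fun s => f (g s)) volume a b := by
  have hmaps := hg.mapsTo_Icc
  have hgm : Measurable fun s : Icc a b => g s :=
    (show Antitone fun s : Icc a b => g s from fun s t hst => hg s.2 t.2 hst).measurable
  have hmeas : AEMeasurable (fun s => f (g s)) (volume.restrict (Icc a b)) :=
    aemeasurable_restrict_of_measurable_subtype measurableSet_Icc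
      (hf.domRestrict.measurable.comp (hgm.subtype_mk (h := fun s => hmaps s.2)))
  obtain ⟨M, hM⟩ := isCompact_Icc.exists_bound_of_continuousOn hf
  rw [intervalIntegrable_iff_integrableOn_Icc_of_le hab]
  exact IntegrableOn.of_bound measure_Icc_lt_top hmeas.aestronglyMeasurable M
    ((ae_restrict_iff' measurableSet_Icc).2 (Eventually.of_forall fun s hs => hM _ (hmaps hs)))

theorem AntitoneOn.mul_le_integral_comp {f g : ℝ → ℝ} {a b c d m : ℝ} (hab : a ≤ b)
    (hg : AntitoneOn g (Icc a b)) (hc : c ≤ g b) (hd : g a ≤ d)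
    (hf : ContinuousOn f (Icc c d)) (hfm : ∀ y ∈ Icc c d, m ≤ f y) :
    (b - a) * m ≤ ∫ s in a..b, f (g s) := by
  have hcd : Icc (g b) (g a) ⊆ Icc c d := Icc_subset_Icc hc hd
  have hint := hg.intervalIntegrable_comp hab (hf.mono hcd)
  calc (b - a) * m = ∫ _ in a..b, m := by simp
    _ ≤ ∫ s in a..b, f (g s) :=
      intervalIntegral.integral_mono_on hab intervalIntegrable_const hint
        fun s hs => hfm _ (hcd (hg.mapsTo_Icc hs))

theorem stmt9_general {n k : ℕ}
    (Ω : Set (EuclideanSpace ℝ (Fin n)))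
    (φ : ℝ → EuclideanSpace ℝ (Fin n) → EuclideanSpace ℝ (Fin n))
    (h : EuclideanSpace ℝ (Fin n) → EuclideanSpace ℝ (Fin k))
    (hinv : ∀ t ≥ (0:ℝ), ∀ x ∈ Ω, φ t x ∈ Ω)
    (hid : ∀ x ∈ Ω, φ 0 x = x)
    (a : ℝ → ℝ)
    (ha : ContinuousOn a (Ici 0) ∧ StrictMonoOn a (Ici 0) ∧ a 0 = 0 ∧
      Tendsto a atTop atTop)
    (V W : EuclideanSpace ℝ (Fin n) → ℝ)
    (hVWnn : ∀ x ∈ Ω, 0 ≤ V x ∧ 0 ≤ W x)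
    (hsup : ∀ s ≥ (0:ℝ), ∃ C : ℝ, ∀ x ∈ Ω, ‖x‖ ≤ s → V x + W x ≤ C)
    (ρ : ℝ → ℝ)
    (hρ : ContinuousOn ρ (Ici 0) ∧ ρ 0 = 0 ∧ ∀ s > (0:ℝ), 0 < ρ s)
    (hW : ∀ x ∈ Ω, a ‖h x‖ ≤ W x)
    (hV : ∀ x ∈ Ω, ∀ t ≥ (0:ℝ), V (φ t x) ≤ V x - ∫ s in (0:ℝ)..t, ρ (W (φ s x)))
    (hWmono : ∀ x ∈ Ω, ∀ s t : ℝ, 0 ≤ s → s ≤ t → W (φ t x) ≤ W (φ s x)) :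
    ∀ ε > (0:ℝ), ∀ R > (0:ℝ), ∃ T > (0:ℝ), ∀ x₀ ∈ Ω, ‖x₀‖ < R →
      ∀ t ≥ T, ‖h (φ t x₀)‖ ≤ ε := by
  obtain ⟨-, ha_mono, ha0, -⟩ := ha
  obtain ⟨hρ_cont, -, hρ_pos⟩ := hρ
  intro ε hε R hR
  have hδ : 0 < a ε := ha0 ▸ ha_mono self_mem_Ici hε.le hε
  obtain ⟨C, hC⟩ := hsup R hR.le
  obtain ⟨D, hCD, hδD⟩ : ∃ D, C ≤ D ∧ a ε ≤ D := ⟨max C (a ε), le_max_left _ _, le_max_right _ _⟩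
  have hρD : ContinuousOn ρ (Icc (a ε) D) := hρ_cont.mono fun y hy => hδ.le.trans hy.1
  obtain ⟨m, hm, hρm⟩ := isCompact_Icc.exists_forall_le' hρD fun y hy => hρ_pos y (hδ.trans_le hy.1)
  obtain ⟨T, hT, hDT⟩ := exists_pos_lt_mul hm D
  refine ⟨T, hT, fun x hx hxR t ht => ?_⟩
  obtain ⟨hVx, hWx⟩ := hVWnn x hx
  have hVWx := hC x hx hxR.le
  -- otherwise `W` stays in `[a ε, D]` on `[0, T]`, so `V` would have to drop by more than `D`
  have hWT : W (φ T x) ≤ a ε := by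
    by_contra! hlt
    have hW0 : W (φ 0 x) ≤ D := by rw [hid x hx]; linarith
    have hdrop := AntitoneOn.mul_le_integral_comp hT.le
      (fun s hs u _ hsu => hWmono x hx s u hs.1 hsu) hlt.le hW0 hρD hρm
    rw [sub_zero] at hdrop
    linarith [hV x hx T hT.le, (hVWnn _ (hinv T hT.le x hx)).1]
  exact (ha_mono.le_iff_le (norm_nonneg _) hε.le).1
    ((hW _ (hinv t (hT.le.trans ht) x hx)).trans ((hWmono x hx T t hT.le ht).trans hWT))

/-- Theorem 1 / Theorem 4 (finite-dimensional version): Lyapunov conditions for uniform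
output attractivity.  `φ` is a semiflow on a positively invariant set `Ω ⊆ ℝⁿ` containing
`0`, with continuous output map `h`.  If `a(|h(x)|) ≤ W(x)`, `V` dissipates at rate
`ρ(W(φ(s,x)))`, `V + W` is bounded on bounded subsets of `Ω`, and `W` is non-increasing
along solutions, then the output converges to zero uniformly on bounded sets. -/
theorem stmt9 {n k : ℕ}
    (Ω : Set (EuclideanSpace ℝ (Fin n)))
    (φ : ℝ → EuclideanSpace ℝ (Fin n) → EuclideanSpace ℝ (Fin n))
    (h : EuclideanSpace ℝ (Fin n) → EuclideanSpace ℝ (Fin k))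
    (hΩ0 : (0 : EuclideanSpace ℝ (Fin n)) ∈ Ω)
    (hinv : ∀ t ≥ (0:ℝ), ∀ x ∈ Ω, φ t x ∈ Ω)
    (hid : ∀ x ∈ Ω, φ 0 x = x)
    (hsemi : ∀ s ≥ (0:ℝ), ∀ t ≥ (0:ℝ), ∀ x ∈ Ω, φ t (φ s x) = φ (t + s) x)
    (hhc : ContinuousOn h Ω) (hh0 : h 0 = 0)
    (a : ℝ → ℝ)
    (ha : ContinuousOn a (Ici 0) ∧ StrictMonoOn a (Ici 0) ∧ a 0 = 0 ∧
      Tendsto a atTop atTop)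
    (V W : EuclideanSpace ℝ (Fin n) → ℝ)
    (hVWnn : ∀ x ∈ Ω, 0 ≤ V x ∧ 0 ≤ W x)
    (hsup : ∀ s ≥ (0:ℝ), ∃ C : ℝ, ∀ x ∈ Ω, ‖x‖ ≤ s → V x + W x ≤ C)
    (ρ : ℝ → ℝ)
    (hρ : ContinuousOn ρ (Ici 0) ∧ ρ 0 = 0 ∧ ∀ s > (0:ℝ), 0 < ρ s)
    (hW : ∀ x ∈ Ω, a ‖h x‖ ≤ W x)
    (hV : ∀ x ∈ Ω, ∀ t ≥ (0:ℝ), V (φ t x) ≤ V x - ∫ s in (0:ℝ)..t, ρ (W (φ s x)))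
    (hWmono : ∀ x ∈ Ω, ∀ s t : ℝ, 0 ≤ s → s ≤ t → W (φ t x) ≤ W (φ s x)) :
    ∀ ε > (0:ℝ), ∀ R > (0:ℝ), ∃ T > (0:ℝ), ∀ x₀ ∈ Ω, ‖x₀‖ < R →
      ∀ t ≥ T, ‖h (φ t x₀)‖ ≤ ε :=
  stmt9_general Ω φ h hinv hid a ha V W hVWnn hsup ρ hρ hW hV hWmono
end

section
/- Let φ : ℝ≥0 × Ω → Ω be a semiflow with output map h : Ω → Y, where Ω is a subset of a normed space X containing 0, h(0) = 0 and φ(t,0) = 0. Then the system is Lagrange output stable and Lyapunov output stable on Ω if and only if there exists ζ ∈ K∞ such that ‖h(φ(t,x₀))‖_Y ≤ ζ(‖x₀‖_X) for all x₀ ∈ Ω and t ≥ 0. -/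
/-!
Both stability conditions say exactly that the output gain
`g(r) = sup {‖h(φ(t,x₀))‖ : x₀ ∈ Ω, ‖x₀‖ ≤ r, t ≥ 0}` is finite and tends to `0` at `0`.
Such a monotone `g` is dominated by `r ↦ r + ∫₁² g(r u) du ≥ r + g(r)`, which is strictly
increasing, unbounded, and squeezed to `0` at `0` by `r + g(2r)`.
-/

open Filter Set Topology

def IsKInfty (ζ : ℝ → ℝ) : Prop :=
  ContinuousOn ζ (Ici 0) ∧ StrictMonoOn ζ (Ici 0) ∧ ζ 0 = 0 ∧ Tendsto ζ atTop atTop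

namespace IsKInfty

variable {ζ : ℝ → ℝ}

theorem monotoneOn (hζ : IsKInfty ζ) : MonotoneOn ζ (Ici 0) :=
  hζ.2.1.monotoneOn

theorem exists_pos_forall_le (hζ : IsKInfty ζ) {ε : ℝ} (hε : 0 < ε) :
    ∃ δ > 0, ∀ r, 0 ≤ r → r < δ → ζ r ≤ ε := by
  have hlim : Tendsto ζ (𝓝[≥] 0) (𝓝 0) := by
    simpa only [hζ.2.2.1] using (hζ.1 0 self_mem_Ici).tendsto
  obtain ⟨δ, hδ, hball⟩ := Metric.tendsto_nhdsWithin_nhds.1 hlim ε hε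
  refine ⟨δ, hδ, fun r hr hrδ => ?_⟩
  have := hball (x := r) hr (by rwa [Real.dist_0_eq_abs, abs_of_nonneg hr])
  exact (le_abs_self _).trans (by simpa using this.le)

end IsKInfty

/-- After the substitution `x = r u` this is `r + r⁻¹ ∫_r^{2r} g`, which is continuous for
`r > 0` even when `g` is not. -/
noncomputable def averageMajorant (g : ℝ → ℝ) (r : ℝ) : ℝ :=
  r + ∫ u in (1:ℝ)..2, g (r * u)

section averageMajorant

variable {g : ℝ → ℝ}

theorem averageMajorant_eq_of_pos (g : ℝ → ℝ) {r : ℝ} (hr : 0 < r) :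
    averageMajorant g r = r + r⁻¹ * ∫ x in r..2 * r, g x := by
  rw [averageMajorant, intervalIntegral.integral_comp_mul_left g hr.ne', smul_eq_mul,
    mul_one, mul_comm r 2]

variable (hg : Monotone g)
include hg

theorem intervalIntegrable_comp_mul {r : ℝ} (hr : 0 ≤ r) (a b : ℝ) :
    IntervalIntegrable (fun u => g (r * u)) MeasureTheory.volume a b :=
  (hg.comp (monotone_mul_left_of_nonneg hr)).intervalIntegrable

theorem add_le_averageMajorant {r : ℝ} (hr : 0 ≤ r) : r + g r ≤ averageMajorant g r := by
  have hconst : ∫ _ in (1:ℝ)..2, g r = g r := by norm_num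
  refine add_le_add_right (hconst ▸ intervalIntegral.integral_mono_on (by norm_num)
    intervalIntegrable_const (intervalIntegrable_comp_mul hg hr 1 2) fun u hu => ?_) r
  exact hg (le_mul_of_one_le_right hr hu.1)

theorem averageMajorant_le {r : ℝ} (hr : 0 ≤ r) : averageMajorant g r ≤ r + g (2 * r) := by
  have hconst : ∫ _ in (1:ℝ)..2, g (2 * r) = g (2 * r) := by norm_num
  refine add_le_add_right (hconst ▸ intervalIntegral.integral_mono_on (by norm_num)
    (intervalIntegrable_comp_mul hg hr 1 2) intervalIntegrable_const fun u hu => ?_) r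
  exact hg (by nlinarith [hu.2])

theorem strictMonoOn_averageMajorant : StrictMonoOn (averageMajorant g) (Ici 0) := by
  intro a ha b hb hab
  have : ∫ u in (1:ℝ)..2, g (a * u) ≤ ∫ u in (1:ℝ)..2, g (b * u) :=
    intervalIntegral.integral_mono_on (by norm_num) (intervalIntegrable_comp_mul hg ha 1 2)
      (intervalIntegrable_comp_mul hg hb 1 2) fun u hu =>
        hg (mul_le_mul_of_nonneg_right hab.le (zero_le_one.trans hu.1))
  exact add_lt_add_of_lt_of_le hab this

theorem continuousAt_averageMajorant_of_pos {r : ℝ} (hr : 0 < r) :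
    ContinuousAt (averageMajorant g) r := by
  have hprim : Continuous fun x => ∫ y in (0:ℝ)..x, g y :=
    intervalIntegral.continuous_primitive (fun _ _ => hg.intervalIntegrable) 0
  have heq : (fun r => r + r⁻¹ * ((∫ y in (0:ℝ)..2 * r, g y) - ∫ y in (0:ℝ)..r, g y))
      =ᶠ[𝓝 r] averageMajorant g := by
    filter_upwards [lt_mem_nhds hr] with x hx
    rw [averageMajorant_eq_of_pos g hx, intervalIntegral.integral_interval_sub_left
      hg.intervalIntegrable hg.intervalIntegrable]
  refine ContinuousAt.congr ?_ heq
  exact continuousAt_id.add ((continuousAt_inv₀ hr.ne').mul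
    ((hprim.comp (continuous_const_mul 2)).sub hprim).continuousAt)

theorem continuousWithinAt_averageMajorant_zero (hg0 : g 0 = 0)
    (hcont : ContinuousWithinAt g (Ici 0) 0) :
    ContinuousWithinAt (averageMajorant g) (Ici 0) 0 := by
  have h2r : Tendsto (fun r : ℝ => 2 * r) (𝓝[≥] 0) (𝓝[≥] 0) :=
    tendsto_nhdsWithin_iff.2
      ⟨by simpa using ((continuous_const_mul (2:ℝ)).tendsto 0).mono_left nhdsWithin_le_nhds,
        eventually_nhdsWithin_of_forall fun x (hx : 0 ≤ x) => by simpa using hx⟩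
  have hupper : Tendsto (fun r : ℝ => r + g (2 * r)) (𝓝[≥] 0) (𝓝 0) := by
    simpa [hg0] using (tendsto_id.mono_left nhdsWithin_le_nhds).add (hcont.tendsto.comp h2r)
  have hzero : averageMajorant g 0 = 0 := by simp [averageMajorant, hg0]
  rw [ContinuousWithinAt, hzero]
  refine tendsto_of_tendsto_of_tendsto_of_le_of_le' tendsto_const_nhds hupper ?_ ?_
  · filter_upwards [self_mem_nhdsWithin] with x (hx : 0 ≤ x)
    calc 0 ≤ x := hx
      _ ≤ x + g x := le_add_of_nonneg_right (hg0 ▸ hg hx)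
      _ ≤ averageMajorant g x := add_le_averageMajorant hg hx
  · filter_upwards [self_mem_nhdsWithin] with x hx using averageMajorant_le hg hx

theorem isKInfty_averageMajorant (hg0 : g 0 = 0)
    (hcont : ContinuousWithinAt g (Ici 0) 0) : IsKInfty (averageMajorant g) := by
  have hid_le : ∀ r ≥ (0:ℝ), r ≤ averageMajorant g r := fun r hr =>
    (le_add_of_nonneg_right (hg0 ▸ hg hr)).trans (add_le_averageMajorant hg hr)
  refine ⟨fun r hr => ?_, strictMonoOn_averageMajorant hg, by simp [averageMajorant, hg0],
    tendsto_atTop_mono' atTop (eventually_ge_atTop 0 |>.mono hid_le) tendsto_id⟩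
  rcases (mem_Ici.1 hr).eq_or_lt with rfl | hr
  · exact continuousWithinAt_averageMajorant_zero hg hg0 hcont
  · exact (continuousAt_averageMajorant_of_pos hg hr).continuousWithinAt

theorem le_averageMajorant {r : ℝ} (hr : 0 ≤ r) : g r ≤ averageMajorant g r :=
  (le_add_of_nonneg_left hr).trans (add_le_averageMajorant hg hr)

end averageMajorant

/-- The `0` makes the supremum monotone in `r` also across empty sublevel sets, where
`sSup ∅ = 0` in `ℝ`. -/
noncomputable def sublevelSup {α : Type*} (A : Set α) (s v : α → ℝ) (r : ℝ) : ℝ :=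
  sSup (insert 0 (v '' {a ∈ A | s a ≤ r}))

section sublevelSup

variable {α : Type*} {A : Set α} {s v : α → ℝ} {r : ℝ}

theorem sublevelSup_nonneg (hbdd : BddAbove (v '' {a ∈ A | s a ≤ r})) :
    0 ≤ sublevelSup A s v r :=
  le_csSup (hbdd.insert 0) (mem_insert 0 _)

theorem le_sublevelSup (hbdd : BddAbove (v '' {a ∈ A | s a ≤ r})) {a : α} (ha : a ∈ A)
    (har : s a ≤ r) : v a ≤ sublevelSup A s v r :=
  le_csSup (hbdd.insert 0) (mem_insert_of_mem 0 ⟨a, ⟨ha, har⟩, rfl⟩)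

theorem sublevelSup_le {c : ℝ} (hc : 0 ≤ c) (h : ∀ a ∈ A, s a ≤ r → v a ≤ c) :
    sublevelSup A s v r ≤ c :=
  csSup_le (insert_nonempty _ _) <| forall_mem_insert.2
    ⟨hc, forall_mem_image.2 fun a ha => h a ha.1 ha.2⟩

theorem monotone_sublevelSup (hbdd : ∀ r, BddAbove (v '' {a ∈ A | s a ≤ r})) :
    Monotone (sublevelSup A s v) := fun _ r hr =>
  csSup_le_csSup ((hbdd r).insert 0) (insert_nonempty _ _) <|
    insert_subset_insert <| image_mono fun _ ha => ⟨ha.1, ha.2.trans hr⟩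

end sublevelSup

section OutputStability

variable {α : Type*} {A : Set α} {s v : α → ℝ}

theorem exists_isKInfty_bound_of_bounded_of_small
    (hs : ∀ a ∈ A, 0 ≤ s a)
    (hbounded : ∀ R > 0, ∃ C, ∀ a ∈ A, s a < R → v a ≤ C)
    (hsmall : ∀ ε > 0, ∃ δ > 0, ∀ a ∈ A, s a < δ → v a ≤ ε) :
    ∃ ζ, IsKInfty ζ ∧ ∀ a ∈ A, v a ≤ ζ (s a) := by
  have hbdd : ∀ r, BddAbove (v '' {a ∈ A | s a ≤ r}) := fun r => by
    obtain ⟨C, hC⟩ := hbounded (|r| + 1) (by positivity)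
    exact ⟨C, forall_mem_image.2 fun a ha =>
      hC a ha.1 (ha.2.trans_lt ((le_abs_self r).trans_lt (lt_add_one _)))⟩
  have hzero : sublevelSup A s v 0 = 0 := by
    refine le_antisymm (sublevelSup_le le_rfl fun a ha has => ?_) (sublevelSup_nonneg (hbdd 0))
    refine le_of_forall_pos_le_add fun ε hε => ?_
    obtain ⟨δ, hδ, hδε⟩ := hsmall ε hε
    simpa using hδε a ha (has.trans_lt hδ)
  have hcont : ContinuousWithinAt (sublevelSup A s v) (Ici 0) 0 := by
    refine Metric.continuousWithinAt_iff.2 fun ε hε => ?_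
    obtain ⟨δ, hδ, hδε⟩ := hsmall (ε / 2) (by positivity)
    refine ⟨δ, hδ, fun {r} (hr : 0 ≤ r) hrδ => ?_⟩
    rw [Real.dist_0_eq_abs, abs_of_nonneg hr] at hrδ
    have hle : sublevelSup A s v r ≤ ε / 2 :=
      sublevelSup_le (by positivity) fun a ha har => hδε a ha (har.trans_lt hrδ)
    rw [hzero, Real.dist_0_eq_abs, abs_of_nonneg (sublevelSup_nonneg (hbdd r))]
    linarith
  have hmono := monotone_sublevelSup hbdd
  exact ⟨averageMajorant (sublevelSup A s v), isKInfty_averageMajorant hmono hzero hcont,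
    fun a ha => (le_sublevelSup (hbdd _) ha le_rfl).trans (le_averageMajorant hmono (hs a ha))⟩

theorem exists_isKInfty_bound_iff (hs : ∀ a ∈ A, 0 ≤ s a) :
    ((∀ R > 0, ∃ C, ∀ a ∈ A, s a < R → v a ≤ C) ∧
      (∀ ε > 0, ∃ δ > 0, ∀ a ∈ A, s a < δ → v a ≤ ε)) ↔
    ∃ ζ, IsKInfty ζ ∧ ∀ a ∈ A, v a ≤ ζ (s a) := by
  refine ⟨fun h => exists_isKInfty_bound_of_bounded_of_small hs h.1 h.2, ?_⟩
  rintro ⟨ζ, hζ, hbound⟩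
  refine ⟨fun R _ => ⟨ζ R, fun a ha haR => (hbound a ha).trans
    (hζ.monotoneOn (hs a ha) ((hs a ha).trans haR.le) haR.le)⟩, fun ε hε => ?_⟩
  obtain ⟨δ, hδ, hδε⟩ := hζ.exists_pos_forall_le hε
  exact ⟨δ, hδ, fun a ha haδ => (hbound a ha).trans (hδε _ (hs a ha) haδ)⟩

end OutputStability

theorem stmt11_general {X Y : Type*} [NormedAddCommGroup X] [NormedAddCommGroup Y]
    (Ω : Set X) (φ : ℝ → X → X) (h : X → Y) :
    -- Lagrange output stability ∧ Lyapunov output stability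
    ((∀ R > (0:ℝ), ∃ C : ℝ, ∀ x₀ ∈ Ω, ‖x₀‖ < R → ∀ t ≥ (0:ℝ), ‖h (φ t x₀)‖ ≤ C) ∧
     (∀ ε > (0:ℝ), ∃ δ > (0:ℝ), ∀ x₀ ∈ Ω, ‖x₀‖ < δ → ∀ t ≥ (0:ℝ), ‖h (φ t x₀)‖ ≤ ε))
    ↔
    -- existence of a K∞ bound
    (∃ ζ : ℝ → ℝ, (ContinuousOn ζ (Ici 0) ∧ StrictMonoOn ζ (Ici 0) ∧ ζ 0 = 0 ∧
        Tendsto ζ atTop atTop) ∧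
      ∀ x₀ ∈ Ω, ∀ t ≥ (0:ℝ), ‖h (φ t x₀)‖ ≤ ζ ‖x₀‖) := by
  simpa only [IsKInfty, Prod.forall, mem_prod, mem_Ici, and_imp, ge_iff_le, imp_forall_iff,
    imp.swap (a := (0:ℝ) ≤ _) (b := ‖(_ : X)‖ < _)] using
    exists_isKInfty_bound_iff (A := Ω ×ˢ Ici (0:ℝ)) (s := fun p => ‖p.1‖)
      (v := fun p => ‖h (φ p.2 p.1)‖) (fun _ _ => norm_nonneg _)

/-- Lemma 4: a semiflow with output on `Ω ⊆ X` is Lagrange output stable and Lyapunov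
output stable on `Ω` if and only if there exists `ζ ∈ K∞` such that
`‖h(φ(t,x₀))‖_Y ≤ ζ(‖x₀‖_X)` for all `x₀ ∈ Ω` and `t ≥ 0`. -/
theorem stmt11 {X Y : Type*} [NormedAddCommGroup X] [NormedAddCommGroup Y]
    (Ω : Set X) (φ : ℝ → X → X) (h : X → Y)
    (hΩ0 : (0:X) ∈ Ω)
    (hinv : ∀ t ≥ (0:ℝ), ∀ x ∈ Ω, φ t x ∈ Ω)
    (hid : ∀ x ∈ Ω, φ 0 x = x)
    (hsemi : ∀ s ≥ (0:ℝ), ∀ t ≥ (0:ℝ), ∀ x ∈ Ω, φ t (φ s x) = φ (t + s) x)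
    (hφ0 : ∀ t ≥ (0:ℝ), φ t 0 = 0) (hh0 : h 0 = 0) :
    -- Lagrange output stability ∧ Lyapunov output stability
    ((∀ R > (0:ℝ), ∃ C : ℝ, ∀ x₀ ∈ Ω, ‖x₀‖ < R → ∀ t ≥ (0:ℝ), ‖h (φ t x₀)‖ ≤ C) ∧
     (∀ ε > (0:ℝ), ∃ δ > (0:ℝ), ∀ x₀ ∈ Ω, ‖x₀‖ < δ → ∀ t ≥ (0:ℝ), ‖h (φ t x₀)‖ ≤ ε))
    ↔
    -- existence of a K∞ bound
    (∃ ζ : ℝ → ℝ, (ContinuousOn ζ (Ici 0) ∧ StrictMonoOn ζ (Ici 0) ∧ ζ 0 = 0 ∧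
        Tendsto ζ atTop atTop) ∧
      ∀ x₀ ∈ Ω, ∀ t ≥ (0:ℝ), ‖h (φ t x₀)‖ ≤ ζ ‖x₀‖) :=
  stmt11_general Ω φ h
end

section
/- Let φ : ℝ≥0 × Ω → Ω be a semiflow with output h : Ω → Y on Ω ⊆ X a normed space, 0 ∈ Ω, h(0) = 0, φ(t,0) = 0. Then the system is uniformly asymptotically output stable on Ω if and only if there exists σ ∈ KL such that ‖h(φ(t,x₀))‖_Y ≤ σ(‖x₀‖_X, t) for all x₀ ∈ Ω and t ≥ 0. -/
open Filter Set Topology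

/-!
A `KL` bound `σ` gives the three stability properties at once: evaluate it at `t = 0` for
Lagrange stability, use continuity of `σ(·, 0)` at `0` for Lyapunov stability, and
`σ(R, t) → 0` for attractivity.

Conversely, take the supremum of the outputs over all trajectories, weighted by cut-offs:
`σ₀(s, t) = sup { ‖h(φ(τ, x))‖ · clamp(2 - ‖x‖ / s) · clamp(1 + τ - t) : x ∈ Ω, τ ≥ 0 }`.
The weights equal `1` when `‖x‖ ≤ s` and `τ ≥ t` (so `σ₀` dominates the outputs) and vanish
when `‖x‖ ≥ 2s` or `τ ≤ t - 1`. Hence Lagrange stability makes every term bounded and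
Lipschitz in `(s, t)` uniformly on `[a, b] × ℝ` with `a > 0`, so `σ₀` is continuous there;
Lyapunov stability gives `σ₀(s, t) → 0` as `s → 0`, and attractivity gives
`σ₀(s, t) → 0` as `t → ∞`. Adding `s / (1 + t)` makes the majorant strictly increasing in `s`.
-/

def clamp01 (u : ℝ) : ℝ := max 0 (min 1 u)

lemma clamp01_nonneg (u : ℝ) : 0 ≤ clamp01 u := le_max_left _ _

lemma clamp01_le_one (u : ℝ) : clamp01 u ≤ 1 := max_le zero_le_one (min_le_left _ _)

lemma clamp01_mono : Monotone clamp01 := fun _ _ huv => max_le_max le_rfl (min_le_min le_rfl huv)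

lemma clamp01_of_nonpos {u : ℝ} (hu : u ≤ 0) : clamp01 u = 0 :=
  max_eq_left ((min_le_right _ _).trans hu)

lemma clamp01_one : clamp01 1 = 1 := by norm_num [clamp01]

lemma abs_clamp01_sub_le (u v : ℝ) : |clamp01 u - clamp01 v| ≤ |u - v| := by
  simpa [clamp01, Real.dist_eq] using ((LipschitzWith.id.const_min 1).const_max 0).dist_le_mul u v

lemma abs_div_sub_div_le {r s s' a b : ℝ} (hr : 0 ≤ r) (hrb : r ≤ b) (ha : 0 < a)
    (hs : a ≤ s) (hs' : a ≤ s') : |r / s - r / s'| ≤ b / a ^ 2 * |s - s'| := by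
  have hs0 : 0 < s := ha.trans_le hs
  have hs'0 : 0 < s' := ha.trans_le hs'
  rw [div_sub_div _ _ hs0.ne' hs'0.ne', abs_div, abs_of_pos (mul_pos hs0 hs'0),
    show r * s' - s * r = r * (s' - s) by ring, abs_mul, abs_of_nonneg hr, abs_sub_comm,
    div_le_iff₀ (mul_pos hs0 hs'0)]
  have hb : 0 ≤ b := hr.trans hrb
  calc r * |s - s'| ≤ b * |s - s'| := by gcongr
    _ = b / a ^ 2 * |s - s'| * a ^ 2 := by field_simp
    _ ≤ b / a ^ 2 * |s - s'| * (s * s') := by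
      gcongr
      rw [sq]
      exact mul_le_mul hs hs' ha.le hs0.le

lemma mul_mul_sub_mul_mul_le {c A B A' B' : ℝ} (hc : 0 ≤ c) (hB : 0 ≤ B) (hB1 : B ≤ 1)
    (hA' : 0 ≤ A') (hA'1 : A' ≤ 1) : c * A * B - c * A' * B' ≤ c * (|A - A'| + |B - B'|) := by
  have hAB : (A - A') * B ≤ |A - A'| :=
    (mul_le_mul_of_nonneg_right (le_abs_self _) hB).trans
      (mul_le_of_le_one_right (abs_nonneg _) hB1)
  have hAB' : A' * (B - B') ≤ |B - B'| :=
    (mul_le_mul_of_nonneg_left (le_abs_self _) hA').trans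
      (mul_le_of_le_one_left (abs_nonneg _) hA'1)
  calc c * A * B - c * A' * B' = c * ((A - A') * B + A' * (B - B')) := by ring
    _ ≤ c * (|A - A'| + |B - B'|) := mul_le_mul_of_nonneg_left (add_le_add hAB hAB') hc

section Stability

-- `r x` stands for `‖x₀‖` and `y x t` for `‖h (φ t x₀)‖`.
variable {α : Type*} (Ω : Set α) (r : α → ℝ) (y : α → ℝ → ℝ)

def IsLagrangeStable : Prop :=
  ∀ R > (0:ℝ), ∃ C : ℝ, ∀ x ∈ Ω, r x < R → ∀ t ≥ (0:ℝ), y x t ≤ C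

def IsLyapunovStable : Prop :=
  ∀ ε > (0:ℝ), ∃ δ > (0:ℝ), ∀ x ∈ Ω, r x < δ → ∀ t ≥ (0:ℝ), y x t ≤ ε

def IsUniformlyAttractive : Prop :=
  ∀ ε > (0:ℝ), ∀ R > (0:ℝ), ∃ T > (0:ℝ), ∀ x ∈ Ω, r x < R → ∀ t ≥ T, y x t ≤ ε

end Stability

def IsKL (σ : ℝ → ℝ → ℝ) : Prop :=
  ContinuousOn (fun q : ℝ × ℝ => σ q.1 q.2) (Ici 0 ×ˢ Ici 0) ∧
    (∀ t ≥ (0:ℝ), StrictMonoOn (fun s => σ s t) (Ici 0) ∧ σ 0 t = 0) ∧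
    (∀ s ≥ (0:ℝ), AntitoneOn (σ s) (Ici 0) ∧ Tendsto (σ s) atTop (𝓝 0)) ∧
    (∀ s ≥ (0:ℝ), ∀ t ≥ (0:ℝ), 0 ≤ σ s t)

section Majorant

variable {α : Type*} (Ω : Set α) (r : α → ℝ) (y : α → ℝ → ℝ)

noncomputable def klTerm (s t : ℝ) (x : α) (τ : ℝ) : ℝ :=
  y x τ * clamp01 (2 - r x / s) * clamp01 (1 + τ - t)

-- Without the case split, `r x / 0 = 0` would give every term full weight at `s = 0`.
noncomputable def envelope (s t : ℝ) : ℝ :=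
  if s ≤ 0 then 0 else ⨆ p : ↥(Ω ×ˢ Ici (0:ℝ)), klTerm r y s t p.1.1 p.1.2

noncomputable def klMajorant (s t : ℝ) : ℝ := envelope Ω r y s t + s / (1 + t)

variable {Ω r y}

lemma klTerm_nonneg (hy : ∀ x t, 0 ≤ y x t) (s t : ℝ) (x : α) (τ : ℝ) :
    0 ≤ klTerm r y s t x τ :=
  mul_nonneg (mul_nonneg (hy x τ) (clamp01_nonneg _)) (clamp01_nonneg _)

lemma klTerm_le_self (hy : ∀ x t, 0 ≤ y x t) (s t : ℝ) (x : α) (τ : ℝ) :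
    klTerm r y s t x τ ≤ y x τ :=
  (mul_le_of_le_one_right (mul_nonneg (hy x τ) (clamp01_nonneg _)) (clamp01_le_one _)).trans
    (mul_le_of_le_one_right (hy x τ) (clamp01_le_one _))

lemma klTerm_eq_zero_of_two_mul_le {s : ℝ} (hs : 0 < s) {x : α} (hx : 2 * s ≤ r x) (t τ : ℝ) :
    klTerm r y s t x τ = 0 := by
  have : 2 ≤ r x / s := (le_div_iff₀ hs).2 (by linarith)
  rw [klTerm, clamp01_of_nonpos (by linarith), mul_zero, zero_mul]

lemma klTerm_eq_zero_of_le_sub_one {t τ : ℝ} (hτ : τ ≤ t - 1) (s : ℝ) (x : α) :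
    klTerm r y s t x τ = 0 := by
  rw [klTerm, clamp01_of_nonpos (show 1 + τ - t ≤ 0 by linarith), mul_zero]

lemma klTerm_le (hy : ∀ x t, 0 ≤ y x t) {s t ε : ℝ} (hs : 0 < s) (hε : 0 ≤ ε) {x : α} {τ : ℝ}
    (H : r x < 2 * s → t - 1 < τ → y x τ ≤ ε) : klTerm r y s t x τ ≤ ε := by
  rcases le_or_gt (2 * s) (r x) with hx | hx
  · exact (klTerm_eq_zero_of_two_mul_le hs hx t τ).trans_le hε
  rcases le_or_gt τ (t - 1) with hτ | hτ
  · exact (klTerm_eq_zero_of_le_sub_one hτ s x).trans_le hε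
  exact (klTerm_le_self hy s t x τ).trans (H hx hτ)

lemma klTerm_self {x : α} (hx : 0 < r x) (τ : ℝ) : klTerm r y (r x) τ x τ = y x τ := by
  rw [klTerm, div_self hx.ne']
  norm_num [clamp01_one]

lemma klTerm_mono_left (hy : ∀ x t, 0 ≤ y x t) {s₁ s₂ : ℝ} (hs₁ : 0 < s₁) (hs : s₁ ≤ s₂)
    (t : ℝ) {x : α} (hx : 0 ≤ r x) (τ : ℝ) : klTerm r y s₁ t x τ ≤ klTerm r y s₂ t x τ :=
  have hdiv : r x / s₂ ≤ r x / s₁ := div_le_div_of_nonneg_left hx hs₁ hs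
  mul_le_mul_of_nonneg_right
    (mul_le_mul_of_nonneg_left (clamp01_mono (by linarith)) (hy x τ)) (clamp01_nonneg _)

lemma klTerm_anti_right (hy : ∀ x t, 0 ≤ y x t) (s : ℝ) {t₁ t₂ : ℝ} (ht : t₁ ≤ t₂)
    (x : α) (τ : ℝ) : klTerm r y s t₂ x τ ≤ klTerm r y s t₁ x τ :=
  mul_le_mul_of_nonneg_left (clamp01_mono (by linarith))
    (mul_nonneg (hy x τ) (clamp01_nonneg _))

lemma klTerm_le_add_mul_dist (hy : ∀ x t, 0 ≤ y x t) {a b C : ℝ} (ha : 0 < a) (hC : 0 ≤ C)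
    {s s' : ℝ} (hs : s ∈ Icc a b) (hs' : s' ∈ Icc a b) (t t' : ℝ) {x : α} (hx : 0 ≤ r x)
    {τ : ℝ} (hyC : r x < 2 * b → y x τ ≤ C) :
    klTerm r y s t x τ ≤ klTerm r y s' t' x τ + C * (2 * b / a ^ 2 + 1) * dist (s, t) (s', t') := by
  have hb : 0 ≤ b := ha.le.trans (hs.1.trans hs.2)
  have hcoef : 0 ≤ 2 * b / a ^ 2 := by positivity
  have hd : 0 ≤ C * (2 * b / a ^ 2 + 1) * dist (s, t) (s', t') := by positivity
  rcases le_or_gt (2 * b) (r x) with hxb | hxb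
  · rw [klTerm_eq_zero_of_two_mul_le (ha.trans_le hs.1) (by linarith [hs.2])]
    exact add_nonneg (klTerm_nonneg hy _ _ _ _) hd
  have hds : dist s s' ≤ dist (s, t) (s', t') := le_max_left _ _
  have hdt : dist t t' ≤ dist (s, t) (s', t') := le_max_right _ _
  have hA : |clamp01 (2 - r x / s) - clamp01 (2 - r x / s')| ≤ 2 * b / a ^ 2 * dist s s' := by
    refine (abs_clamp01_sub_le _ _).trans ?_
    rw [show 2 - r x / s - (2 - r x / s') = r x / s' - r x / s by ring, abs_sub_comm,
      Real.dist_eq]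
    exact abs_div_sub_div_le hx hxb.le ha hs.1 hs'.1
  have hB : |clamp01 (1 + τ - t) - clamp01 (1 + τ - t')| ≤ dist t t' := by
    refine (abs_clamp01_sub_le _ _).trans_eq ?_
    rw [Real.dist_eq, show 1 + τ - t - (1 + τ - t') = t' - t by ring, abs_sub_comm]
  have hdiff := mul_mul_sub_mul_mul_le (hy x τ) (clamp01_nonneg (1 + τ - t))
    (clamp01_le_one (1 + τ - t)) (clamp01_nonneg (2 - r x / s')) (clamp01_le_one (2 - r x / s'))
    (A := clamp01 (2 - r x / s)) (B' := clamp01 (1 + τ - t'))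
  have hy' : y x τ * (|clamp01 (2 - r x / s) - clamp01 (2 - r x / s')|
      + |clamp01 (1 + τ - t) - clamp01 (1 + τ - t')|)
      ≤ C * (2 * b / a ^ 2 * dist (s, t) (s', t') + dist (s, t) (s', t')) :=
    mul_le_mul (hyC hxb) (add_le_add (hA.trans (by gcongr)) (hB.trans hdt))
      (add_nonneg (abs_nonneg _) (abs_nonneg _)) hC
  unfold klTerm
  linarith

lemma envelope_of_nonpos {s : ℝ} (hs : s ≤ 0) (t : ℝ) : envelope Ω r y s t = 0 := if_pos hs

lemma envelope_of_pos {s : ℝ} (hs : 0 < s) (t : ℝ) :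
    envelope Ω r y s t = ⨆ p : ↥(Ω ×ˢ Ici (0:ℝ)), klTerm r y s t p.1.1 p.1.2 :=
  if_neg hs.not_ge

lemma envelope_nonneg (hy : ∀ x t, 0 ≤ y x t) (s t : ℝ) : 0 ≤ envelope Ω r y s t := by
  unfold envelope
  split_ifs
  · exact le_rfl
  · exact Real.iSup_nonneg fun _ => klTerm_nonneg hy _ _ _ _

lemma envelope_le (hy : ∀ x t, 0 ≤ y x t) {s t ε : ℝ} (hε : 0 ≤ ε)
    (H : ∀ x ∈ Ω, r x < 2 * s → ∀ τ ≥ (0:ℝ), t - 1 < τ → y x τ ≤ ε) :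
    envelope Ω r y s t ≤ ε := by
  unfold envelope
  split_ifs with hs
  · exact hε
  · exact Real.iSup_le (fun p => klTerm_le hy (not_le.1 hs) hε (H _ p.2.1 · _ p.2.2)) hε

lemma bddAbove_range_klTerm (hy : ∀ x t, 0 ≤ y x t) (hLag : IsLagrangeStable Ω r y)
    {s : ℝ} (hs : 0 < s) (t : ℝ) :
    BddAbove (range fun p : ↥(Ω ×ˢ Ici (0:ℝ)) => klTerm r y s t p.1.1 p.1.2) := by
  obtain ⟨C, hC⟩ := hLag (2 * s) (by linarith)
  exact ⟨max C 0, forall_mem_range.2 fun p => klTerm_le hy hs (le_max_right _ _)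
    fun hx _ => (hC _ p.2.1 hx _ p.2.2).trans (le_max_left _ _)⟩

lemma le_envelope (hy : ∀ x t, 0 ≤ y x t) (hLag : IsLagrangeStable Ω r y) {x : α} (hx : x ∈ Ω)
    (hrx : 0 < r x) {t : ℝ} (ht : 0 ≤ t) : y x t ≤ envelope Ω r y (r x) t := by
  rw [envelope_of_pos hrx, ← klTerm_self (y := y) hrx t]
  exact le_ciSup (f := fun p : ↥(Ω ×ˢ Ici (0:ℝ)) => klTerm r y (r x) t p.1.1 p.1.2)
    (bddAbove_range_klTerm hy hLag hrx t) ⟨(x, t), hx, ht⟩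

lemma envelope_mono_left (hy : ∀ x t, 0 ≤ y x t) (hr : ∀ x, 0 ≤ r x)
    (hLag : IsLagrangeStable Ω r y) {s₁ s₂ : ℝ} (hs : s₁ ≤ s₂) (t : ℝ) :
    envelope Ω r y s₁ t ≤ envelope Ω r y s₂ t := by
  rcases le_or_gt s₁ 0 with hs₁ | hs₁
  · rw [envelope_of_nonpos hs₁]
    exact envelope_nonneg hy s₂ t
  · rw [envelope_of_pos hs₁, envelope_of_pos (hs₁.trans_le hs)]
    exact ciSup_mono (bddAbove_range_klTerm hy hLag (hs₁.trans_le hs) t)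
      fun p => klTerm_mono_left hy hs₁ hs t (hr _) _

lemma envelope_anti_right (hy : ∀ x t, 0 ≤ y x t) (hLag : IsLagrangeStable Ω r y) (s : ℝ)
    {t₁ t₂ : ℝ} (ht : t₁ ≤ t₂) : envelope Ω r y s t₂ ≤ envelope Ω r y s t₁ := by
  rcases le_or_gt s 0 with hs | hs
  · rw [envelope_of_nonpos hs, envelope_of_nonpos hs]
  · rw [envelope_of_pos hs, envelope_of_pos hs]
    exact ciSup_mono (bddAbove_range_klTerm hy hLag hs t₁)
      fun p => klTerm_anti_right hy s ht _ _

lemma lipschitzOnWith_envelope (hy : ∀ x t, 0 ≤ y x t) (hr : ∀ x, 0 ≤ r x)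
    (hLag : IsLagrangeStable Ω r y) {a b : ℝ} (ha : 0 < a) (hab : a ≤ b) :
    ∃ K, LipschitzOnWith K (fun q : ℝ × ℝ => envelope Ω r y q.1 q.2) (Icc a b ×ˢ univ) := by
  obtain ⟨C₀, hC₀⟩ := hLag (2 * b) (by linarith)
  refine ⟨_, LipschitzOnWith.of_le_add_mul' (max C₀ 0 * (2 * b / a ^ 2 + 1))
    fun p hp q hq => ?_⟩
  have hp₁ : 0 < p.1 := ha.trans_le hp.1.1
  have hq₁ : 0 < q.1 := ha.trans_le hq.1.1
  have hd : 0 ≤ max C₀ 0 * (2 * b / a ^ 2 + 1) * dist p q := by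
    have : 0 ≤ max C₀ 0 := le_max_right _ _
    have : 0 ≤ b := by linarith
    positivity
  refine (envelope_of_pos hp₁ _).trans_le (Real.iSup_le (fun i => ?_)
    (add_nonneg (envelope_nonneg hy _ _) hd))
  rw [envelope_of_pos hq₁]
  exact (klTerm_le_add_mul_dist hy ha (le_max_right _ _) hp.1 hq.1 p.2 q.2 (hr _)
    fun hx => (hC₀ _ i.2.1 hx _ i.2.2).trans (le_max_left _ _)).trans
    (add_le_add (le_ciSup (f := fun i : ↥(Ω ×ˢ Ici (0:ℝ)) => klTerm r y q.1 q.2 i.1.1 i.1.2)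
      (bddAbove_range_klTerm hy hLag hq₁ q.2) i) le_rfl)

lemma continuous_envelope (hy : ∀ x t, 0 ≤ y x t) (hr : ∀ x, 0 ≤ r x)
    (hLag : IsLagrangeStable Ω r y) (hLya : IsLyapunovStable Ω r y) :
    Continuous fun q : ℝ × ℝ => envelope Ω r y q.1 q.2 := by
  refine continuous_iff_continuousAt.2 fun p => ?_
  rcases le_or_gt p.1 0 with hp | hp
  · show Tendsto _ (𝓝 p) (𝓝 (envelope Ω r y p.1 p.2))
    rw [envelope_of_nonpos hp]
    refine tendsto_order.2 ⟨fun c hc => Eventually.of_forall fun q =>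
      hc.trans_le (envelope_nonneg hy _ _), fun c hc => ?_⟩
    obtain ⟨δ, hδ, hδc⟩ := hLya (c / 2) (by linarith)
    filter_upwards [(continuous_fst.tendsto p).eventually
      (gt_mem_nhds (by linarith : p.1 < δ / 2))] with q hq
    exact (envelope_le hy (by linarith) fun x hx hxq τ hτ _ =>
      hδc x hx (by linarith) τ hτ).trans_lt (by linarith)
  · obtain ⟨K, hK⟩ :=
      lipschitzOnWith_envelope hy hr hLag (half_pos hp) (by linarith : p.1 / 2 ≤ 2 * p.1)
    exact hK.continuousOn.continuousAt
      (prod_mem_nhds (Icc_mem_nhds (by linarith) (by linarith)) univ_mem)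

lemma tendsto_envelope (hy : ∀ x t, 0 ≤ y x t) (hAtt : IsUniformlyAttractive Ω r y) (s : ℝ) :
    Tendsto (envelope Ω r y s) atTop (𝓝 0) := by
  rcases le_or_gt s 0 with hs | hs
  · exact tendsto_const_nhds.congr fun t => (envelope_of_nonpos hs t).symm
  refine tendsto_order.2 ⟨fun c hc => Eventually.of_forall fun t =>
    hc.trans_le (envelope_nonneg hy _ _), fun c hc => ?_⟩
  obtain ⟨T, -, hT⟩ := hAtt (c / 2) (by linarith) (2 * s) (by linarith)
  refine eventually_atTop.2 ⟨T + 1, fun t ht => ?_⟩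
  exact (envelope_le hy (by linarith) fun x hx hxs τ _ hτ =>
    hT x hx hxs τ (by linarith)).trans_lt (by linarith)

lemma isKL_klMajorant (hy : ∀ x t, 0 ≤ y x t) (hr : ∀ x, 0 ≤ r x)
    (hLag : IsLagrangeStable Ω r y) (hLya : IsLyapunovStable Ω r y)
    (hAtt : IsUniformlyAttractive Ω r y) : IsKL (klMajorant Ω r y) := by
  refine ⟨?_, fun t ht => ⟨fun s₁ _ s₂ _ hs => ?_, ?_⟩, fun s hs => ⟨fun t₁ ht₁ t₂ _ ht => ?_, ?_⟩,
    fun s hs t ht => ?_⟩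
  · exact (continuous_envelope hy hr hLag hLya).continuousOn.add
      (continuousOn_fst.div (continuousOn_const.add continuousOn_snd)
        fun q hq => (by linarith [mem_Ici.1 hq.2] : (0:ℝ) < 1 + q.2).ne')
  · exact add_lt_add_of_le_of_lt (envelope_mono_left hy hr hLag hs.le t)
      (div_lt_div_of_pos_right hs (by linarith))
  · simp [klMajorant, envelope_of_nonpos le_rfl]
  · exact add_le_add (envelope_anti_right hy hLag s ht)
      (div_le_div_of_nonneg_left hs (by linarith [mem_Ici.1 ht₁]) (by linarith))
  · have := (tendsto_envelope hy hAtt s).add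
      ((tendsto_const_nhds (x := s)).div_atTop (tendsto_atTop_add_const_left _ 1 tendsto_id))
    rwa [add_zero] at this
  · exact add_nonneg (envelope_nonneg hy s t) (div_nonneg hs (by linarith))

lemma le_klMajorant (hy : ∀ x t, 0 ≤ y x t) (hr : ∀ x, 0 ≤ r x)
    (hLag : IsLagrangeStable Ω r y) (hLya : IsLyapunovStable Ω r y) {x : α} (hx : x ∈ Ω)
    {t : ℝ} (ht : 0 ≤ t) : y x t ≤ klMajorant Ω r y (r x) t := by
  have hdiv : 0 ≤ r x / (1 + t) := div_nonneg (hr x) (by linarith)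
  rcases (hr x).eq_or_lt with h0 | hpos
  · have hy0 : y x t ≤ 0 := le_of_forall_gt_imp_ge_of_dense fun ε hε => by
      obtain ⟨δ, hδ, H⟩ := hLya ε hε
      exact H x hx (h0 ▸ hδ) t ht
    exact hy0.trans (add_nonneg (envelope_nonneg hy _ _) hdiv)
  · exact (le_envelope hy hLag hx hpos ht).trans (le_add_of_nonneg_right hdiv)

end Majorant

namespace IsKL

variable {σ : ℝ → ℝ → ℝ}

lemma mono_left (hσ : IsKL σ) {s₁ s₂ t : ℝ} (hs₁ : 0 ≤ s₁) (hs : s₁ ≤ s₂) (ht : 0 ≤ t) :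
    σ s₁ t ≤ σ s₂ t :=
  (hσ.2.1 t ht).1.monotoneOn hs₁ (hs₁.trans hs) hs

lemma anti_right (hσ : IsKL σ) {s t₁ t₂ : ℝ} (hs : 0 ≤ s) (ht₁ : 0 ≤ t₁) (ht : t₁ ≤ t₂) :
    σ s t₂ ≤ σ s t₁ :=
  (hσ.2.2.1 s hs).1 ht₁ (ht₁.trans ht) ht

lemma exists_pos_forall_lt (hσ : IsKL σ) {ε : ℝ} (hε : 0 < ε) :
    ∃ δ > 0, ∀ s, 0 ≤ s → s < δ → σ s 0 < ε := by
  have hcont : ContinuousWithinAt (fun s => σ s 0) (Ici 0) 0 :=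
    (hσ.1 (0, 0) ⟨self_mem_Ici, self_mem_Ici⟩).comp (f := fun s : ℝ => (s, (0:ℝ))) (by fun_prop)
      fun s hs => ⟨hs, self_mem_Ici⟩
  have hlt : ∀ᶠ s in 𝓝[≥] 0, σ s 0 < ε :=
    hcont.eventually_lt continuousWithinAt_const (show σ 0 0 < ε by rwa [(hσ.2.1 0 le_rfl).2])
  obtain ⟨δ, hδ, H⟩ := Metric.eventually_nhds_iff.1 (eventually_nhdsWithin_iff.1 hlt)
  exact ⟨δ, hδ, fun s hs hsδ => H (by rwa [Real.dist_eq, sub_zero, abs_of_nonneg hs]) hs⟩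

variable {α : Type*} {Ω : Set α} {r : α → ℝ} {y : α → ℝ → ℝ}

lemma isLagrangeStable (hσ : IsKL σ) (hr : ∀ x, 0 ≤ r x)
    (hbound : ∀ x ∈ Ω, ∀ t ≥ (0:ℝ), y x t ≤ σ (r x) t) : IsLagrangeStable Ω r y :=
  fun R _ => ⟨σ R 0, fun x hx hxR t ht => (hbound x hx t ht).trans <|
    (hσ.anti_right (hr x) le_rfl ht).trans (hσ.mono_left (hr x) hxR.le le_rfl)⟩

lemma isLyapunovStable (hσ : IsKL σ) (hr : ∀ x, 0 ≤ r x)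
    (hbound : ∀ x ∈ Ω, ∀ t ≥ (0:ℝ), y x t ≤ σ (r x) t) : IsLyapunovStable Ω r y := by
  intro ε hε
  obtain ⟨δ, hδ, H⟩ := hσ.exists_pos_forall_lt hε
  exact ⟨δ, hδ, fun x hx hxδ t ht => (hbound x hx t ht).trans <|
    (hσ.anti_right (hr x) le_rfl ht).trans (H _ (hr x) hxδ).le⟩

lemma isUniformlyAttractive (hσ : IsKL σ) (hr : ∀ x, 0 ≤ r x)
    (hbound : ∀ x ∈ Ω, ∀ t ≥ (0:ℝ), y x t ≤ σ (r x) t) : IsUniformlyAttractive Ω r y := by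
  intro ε hε R hR
  obtain ⟨T, hT⟩ := eventually_atTop.1 (((hσ.2.2.1 R hR.le).2).eventually_le_const hε)
  refine ⟨max T 1, by positivity, fun x hx hxR t ht => ?_⟩
  have ht0 : 0 ≤ t := by linarith [le_max_right T 1]
  exact (hbound x hx t ht0).trans <|
    (hσ.mono_left (hr x) hxR.le ht0).trans (hT t (le_of_max_le_left ht))

end IsKL

theorem uaos_iff_exists_isKL_bound {α : Type*} {Ω : Set α} {r : α → ℝ} {y : α → ℝ → ℝ}
    (hy : ∀ x t, 0 ≤ y x t) (hr : ∀ x, 0 ≤ r x) :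
    IsLagrangeStable Ω r y ∧ IsLyapunovStable Ω r y ∧ IsUniformlyAttractive Ω r y ↔
      ∃ σ, IsKL σ ∧ ∀ x ∈ Ω, ∀ t ≥ (0:ℝ), y x t ≤ σ (r x) t := by
  constructor
  · rintro ⟨hLag, hLya, hAtt⟩
    exact ⟨klMajorant Ω r y, isKL_klMajorant hy hr hLag hLya hAtt,
      fun x hx t ht => le_klMajorant hy hr hLag hLya hx ht⟩
  · rintro ⟨σ, hσ, hbound⟩
    exact ⟨hσ.isLagrangeStable hr hbound, hσ.isLyapunovStable hr hbound,
      hσ.isUniformlyAttractive hr hbound⟩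

theorem stmt12_general {X Y : Type*} [NormedAddCommGroup X] [NormedAddCommGroup Y]
    (Ω : Set X) (φ : ℝ → X → X) (h : X → Y) :
    -- UAOS: Lagrange ∧ Lyapunov output stability ∧ uniform output attractivity
    ((∀ R > (0:ℝ), ∃ C : ℝ, ∀ x₀ ∈ Ω, ‖x₀‖ < R → ∀ t ≥ (0:ℝ), ‖h (φ t x₀)‖ ≤ C) ∧
     (∀ ε > (0:ℝ), ∃ δ > (0:ℝ), ∀ x₀ ∈ Ω, ‖x₀‖ < δ → ∀ t ≥ (0:ℝ), ‖h (φ t x₀)‖ ≤ ε) ∧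
     (∀ ε > (0:ℝ), ∀ R > (0:ℝ), ∃ T > (0:ℝ), ∀ x₀ ∈ Ω, ‖x₀‖ < R →
        ∀ t ≥ T, ‖h (φ t x₀)‖ ≤ ε))
    ↔
    -- existence of a KL bound
    (∃ σ : ℝ → ℝ → ℝ,
      (ContinuousOn (fun q : ℝ × ℝ => σ q.1 q.2) (Ici 0 ×ˢ Ici 0) ∧
       (∀ t ≥ (0:ℝ), StrictMonoOn (fun s => σ s t) (Ici 0) ∧ σ 0 t = 0) ∧
       (∀ s ≥ (0:ℝ), AntitoneOn (σ s) (Ici 0) ∧ Tendsto (σ s) atTop (nhds 0)) ∧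
       (∀ s ≥ (0:ℝ), ∀ t ≥ (0:ℝ), 0 ≤ σ s t)) ∧
      ∀ x₀ ∈ Ω, ∀ t ≥ (0:ℝ), ‖h (φ t x₀)‖ ≤ σ ‖x₀‖ t) :=
  uaos_iff_exists_isKL_bound (r := norm) (y := fun x t => ‖h (φ t x)‖)
    (fun _ _ => norm_nonneg _) norm_nonneg

/-- Lemma 5: a semiflow with output on `Ω ⊆ X` is uniformly asymptotically output stable
(UAOS) on `Ω` if and only if there exists a `KL` function `σ` such that
`‖h(φ(t,x₀))‖_Y ≤ σ(‖x₀‖_X, t)` for all `x₀ ∈ Ω` and `t ≥ 0`. -/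
theorem stmt12 {X Y : Type*} [NormedAddCommGroup X] [NormedAddCommGroup Y]
    (Ω : Set X) (φ : ℝ → X → X) (h : X → Y)
    (hΩ0 : (0:X) ∈ Ω)
    (hinv : ∀ t ≥ (0:ℝ), ∀ x ∈ Ω, φ t x ∈ Ω)
    (hid : ∀ x ∈ Ω, φ 0 x = x)
    (hsemi : ∀ s ≥ (0:ℝ), ∀ t ≥ (0:ℝ), ∀ x ∈ Ω, φ t (φ s x) = φ (t + s) x)
    (hφ0 : ∀ t ≥ (0:ℝ), φ t 0 = 0) (hh0 : h 0 = 0) :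
    -- UAOS: Lagrange ∧ Lyapunov output stability ∧ uniform output attractivity
    ((∀ R > (0:ℝ), ∃ C : ℝ, ∀ x₀ ∈ Ω, ‖x₀‖ < R → ∀ t ≥ (0:ℝ), ‖h (φ t x₀)‖ ≤ C) ∧
     (∀ ε > (0:ℝ), ∃ δ > (0:ℝ), ∀ x₀ ∈ Ω, ‖x₀‖ < δ → ∀ t ≥ (0:ℝ), ‖h (φ t x₀)‖ ≤ ε) ∧
     (∀ ε > (0:ℝ), ∀ R > (0:ℝ), ∃ T > (0:ℝ), ∀ x₀ ∈ Ω, ‖x₀‖ < R →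
        ∀ t ≥ T, ‖h (φ t x₀)‖ ≤ ε))
    ↔
    -- existence of a KL bound
    (∃ σ : ℝ → ℝ → ℝ,
      (ContinuousOn (fun q : ℝ × ℝ => σ q.1 q.2) (Ici 0 ×ˢ Ici 0) ∧
       (∀ t ≥ (0:ℝ), StrictMonoOn (fun s => σ s t) (Ici 0) ∧ σ 0 t = 0) ∧
       (∀ s ≥ (0:ℝ), AntitoneOn (σ s) (Ici 0) ∧ Tendsto (σ s) atTop (nhds 0)) ∧
       (∀ s ≥ (0:ℝ), ∀ t ≥ (0:ℝ), 0 ≤ σ s t)) ∧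
      ∀ x₀ ∈ Ω, ∀ t ≥ (0:ℝ), ‖h (φ t x₀)‖ ≤ σ ‖x₀‖ t) :=
  stmt12_general Ω φ h
end

section
/- Suppose V, W : ℝ≥0 → ℝ≥0 are differentiable, ρ : ℝ≥0 → ℝ≥0 is continuous, non-decreasing and positive definite, γ : ℝ≥0 → ℝ≥0 is continuous, V'(t) ≤ -ρ(W(t)) for all t ≥ 0, and W'(t) ≤ γ(V(t)) for all t ≥ 0. Then W(t) → 0 as t → ∞. -/
/-!
Since `V' ≤ -ρ(W) ≤ 0`, `V` is non-increasing, so `V(t) ∈ [0, V(0)]` and `W' ≤ M`, a bound for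
`γ` on `[0, V(0)]`; hence `t ↦ W(t) - M t` is non-increasing. Integrating `V' ≤ -ρ(W)` gives
`∫₀^∞ ρ(W) ≤ V(0)`. If `W(t) ≥ ε` at arbitrarily late times, the slope bound keeps `W ≥ ε/2` on a
window of fixed length `δ` before each such time, and these windows contribute `ρ(ε/2) δ > 0` to
arbitrarily late parts of a convergent integral (relaxed Barbălat lemma).
-/

open Filter Set MeasureTheory Topology

lemma antitoneOn_Ici_of_hasDerivAt_nonpos {f f' : ℝ → ℝ} {a : ℝ}
    (hf : ∀ t ≥ a, HasDerivAt f (f' t) t) (hf' : ∀ t ≥ a, f' t ≤ 0) :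
    AntitoneOn f (Ici a) :=
  antitoneOn_of_hasDerivWithinAt_nonpos (convex_Ici a)
    (fun t ht => (hf t ht).continuousAt.continuousWithinAt)
    (fun t ht => (hf t (interior_subset ht)).hasDerivWithinAt)
    (fun t ht => hf' t (interior_subset ht))

lemma integrableOn_Ioi_of_hasDerivAt_le_neg {V V' f : ℝ → ℝ} {a : ℝ}
    (hVnn : ∀ t ≥ a, 0 ≤ V t) (hVd : ∀ t ≥ a, HasDerivAt V (V' t) t)
    (hf : ContinuousOn f (Ici a)) (hfnn : ∀ t ≥ a, 0 ≤ f t) (hV' : ∀ t ≥ a, V' t ≤ -f t) :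
    IntegrableOn f (Ioi a) := by
  have hfi (b : ℝ) : IntegrableOn f (Icc a b) := (hf.mono Icc_subset_Ici_self).integrableOn_Icc
  refine integrableOn_Ioi_of_intervalIntegral_norm_bounded (V a) a
    (fun b => (hfi b).mono_set Ioc_subset_Icc_self) tendsto_id ?_
  filter_upwards [eventually_ge_atTop a] with b hab
  calc ∫ t in a..b, ‖f t‖ = ∫ t in a..b, f t :=
        intervalIntegral.integral_congr fun t ht =>
          Real.norm_of_nonneg (hfnn t (uIcc_of_le hab ▸ ht).1)
    _ ≤ (-V) b - (-V) a :=
        intervalIntegral.integral_le_sub_of_hasDeriv_right_of_le hab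
          (fun t ht => (hVd t (Icc_subset_Ici_self ht)).neg.continuousAt.continuousWithinAt)
          (fun t ht => (hVd t ht.1.le).neg.hasDerivWithinAt) (hfi b)
          (fun t ht => le_neg.1 (hV' t ht.1.le))
    _ ≤ V a := by simpa using hVnn b hab

lemma tendsto_intervalIntegral_sub_atTop_zero {f : ℝ → ℝ} {a : ℝ} (hf : IntegrableOn f (Ioi a))
    (δ : ℝ) : Tendsto (fun t => ∫ s in t - δ..t, f s) atTop (𝓝 0) := by
  have hlim (c : ℝ) : Tendsto (fun t => ∫ s in a..t - c, f s) atTop (𝓝 (∫ s in Ioi a, f s)) :=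
    intervalIntegral_tendsto_integral_Ioi a hf (tendsto_atTop_add_const_right _ _ tendsto_id)
  have hii (b : ℝ) (hb : a ≤ b) : IntervalIntegrable f volume a b :=
    (intervalIntegrable_iff_integrableOn_Ioc_of_le hb).2 (hf.mono_set Ioc_subset_Ioi_self)
  refine (by simpa using (hlim 0).sub (hlim δ) :
    Tendsto (fun t => (∫ s in a..t, f s) - ∫ s in a..t - δ, f s) atTop (𝓝 0)).congr' ?_
  filter_upwards [eventually_ge_atTop (a + δ), eventually_ge_atTop a] with t htδ ht
  exact intervalIntegral.integral_interval_sub_left (hii t ht) (hii _ (by linarith))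

theorem tendsto_zero_of_antitoneOn_sub_mul_of_integrableOn {W ρ : ℝ → ℝ} {M : ℝ}
    (hWnn : ∀ t ≥ 0, 0 ≤ W t) (hW : AntitoneOn (fun t => W t - M * t) (Ici 0))
    (hρmono : MonotoneOn ρ (Ici 0)) (hρpos : ∀ s > 0, 0 < ρ s)
    (hint : IntegrableOn (fun t => ρ (W t)) (Ioi 0)) :
    Tendsto W atTop (𝓝 0) := by
  refine tendsto_order.2 ⟨fun a ha => ?_, fun ε hε => ?_⟩
  · filter_upwards [eventually_ge_atTop 0] with t ht
    exact ha.trans_le (hWnn t ht)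
  by_contra hfreq
  rw [not_eventually] at hfreq
  have hε2 : 0 < ε / 2 := half_pos hε
  set L := max M 1
  have hL : 0 < L := lt_max_of_lt_right one_pos
  set δ := ε / (2 * L)
  have hδ : 0 < δ := by positivity
  have hLδ : L * δ = ε / 2 := by simp only [δ]; field_simp
  have hwindow (t : ℝ) (htδ : δ ≤ t) (hWt : ε ≤ W t) :
      ρ (ε / 2) * δ ≤ ∫ s in t - δ..t, ρ (W s) := by
    have hWx (x : ℝ) (hx : x ∈ Icc (t - δ) t) : ε / 2 ≤ W x := by
      have hx0 : 0 ≤ x := by linarith [hx.1]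
      have hslope : W t - M * t ≤ W x - M * x := hW hx0 (hx0.trans hx.2) hx.2
      have hMx : M * (t - x) ≤ L * δ :=
        mul_le_mul (le_max_left M 1) (by linarith [hx.1]) (by linarith [hx.2]) hL.le
      linarith
    have hii : IntervalIntegrable (fun s => ρ (W s)) volume (t - δ) t :=
      (intervalIntegrable_iff_integrableOn_Ioc_of_le (by linarith)).2
        (hint.mono_set fun x hx => by simp only [mem_Ioc, mem_Ioi] at hx ⊢; linarith [hx.1])
    calc ρ (ε / 2) * δ = ∫ _ in t - δ..t, ρ (ε / 2) := by simp [mul_comm]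
      _ ≤ ∫ s in t - δ..t, ρ (W s) :=
        intervalIntegral.integral_mono_on (by linarith) intervalIntegrable_const hii fun x hx =>
          hρmono hε2.le (hε2.le.trans (hWx x hx)) (hWx x hx)
  have hsmall := (tendsto_order.1 (tendsto_intervalIntegral_sub_atTop_zero hint δ)).2 _
    (mul_pos (hρpos _ hε2) hδ)
  obtain ⟨t, hWt, hlt, htδ⟩ :=
    (hfreq.and_eventually (hsmall.and (eventually_ge_atTop δ))).exists
  exact (hwindow t htδ (not_lt.1 hWt)).not_gt hlt

theorem stmt14_general (V W V' W' ρ γ : ℝ → ℝ)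
    (hVnn : ∀ t ≥ (0:ℝ), 0 ≤ V t) (hWnn : ∀ t ≥ (0:ℝ), 0 ≤ W t)
    (hVd : ∀ t ≥ (0:ℝ), HasDerivAt V (V' t) t)
    (hWd : ∀ t ≥ (0:ℝ), HasDerivAt W (W' t) t)
    (hρc : ContinuousOn ρ (Ici 0)) (hρmono : MonotoneOn ρ (Ici 0))
    (hρ0 : ρ 0 = 0) (hρpos : ∀ s > (0:ℝ), 0 < ρ s)
    (hγc : ContinuousOn γ (Ici 0))
    (hV' : ∀ t ≥ (0:ℝ), V' t ≤ -ρ (W t))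
    (hW' : ∀ t ≥ (0:ℝ), W' t ≤ γ (V t)) :
    Tendsto W atTop (nhds 0) := by
  have hρW (t : ℝ) (ht : t ≥ 0) : 0 ≤ ρ (W t) :=
    hρ0 ▸ hρmono self_mem_Ici (hWnn t ht) (hWnn t ht)
  have hVanti : AntitoneOn V (Ici 0) :=
    antitoneOn_Ici_of_hasDerivAt_nonpos hVd fun t ht => (hV' t ht).trans (neg_nonpos.2 (hρW t ht))
  obtain ⟨M, hM⟩ :=
    (isCompact_Icc (a := 0) (b := V 0)).bddAbove_image (hγc.mono Icc_subset_Ici_self)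
  have hW'M (t : ℝ) (ht : t ≥ 0) : W' t - M ≤ 0 :=
    sub_nonpos.2 <| (hW' t ht).trans <|
      hM (mem_image_of_mem γ ⟨hVnn t ht, hVanti self_mem_Ici ht ht⟩)
  have hWslope : AntitoneOn (fun t => W t - M * t) (Ici 0) :=
    antitoneOn_Ici_of_hasDerivAt_nonpos
      (fun t ht => by simpa using (hWd t ht).fun_sub ((hasDerivAt_id t).const_mul M)) hW'M
  have hρWc : ContinuousOn (fun t => ρ (W t)) (Ici 0) :=
    hρc.comp (fun t ht => (hWd t ht).continuousAt.continuousWithinAt) fun t ht => hWnn t ht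
  exact tendsto_zero_of_antitoneOn_sub_mul_of_integrableOn hWnn hWslope hρmono hρpos
    (integrableOn_Ioi_of_hasDerivAt_le_neg hVnn hVd hρWc hρW hV')

/-- Scalar core of Theorem 2 (case (2.9) with `ρ` non-decreasing): if
`V' ≤ -ρ(W)` and `W' ≤ γ(V)` with `ρ` continuous, non-decreasing, positive definite and
`γ` continuous (nonnegative), then `W(t) → 0` as `t → ∞`. -/
theorem stmt14 (V W V' W' ρ γ : ℝ → ℝ)
    (hVnn : ∀ t ≥ (0:ℝ), 0 ≤ V t) (hWnn : ∀ t ≥ (0:ℝ), 0 ≤ W t)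
    (hVd : ∀ t ≥ (0:ℝ), HasDerivAt V (V' t) t)
    (hWd : ∀ t ≥ (0:ℝ), HasDerivAt W (W' t) t)
    (hρc : ContinuousOn ρ (Ici 0)) (hρmono : MonotoneOn ρ (Ici 0))
    (hρ0 : ρ 0 = 0) (hρpos : ∀ s > (0:ℝ), 0 < ρ s)
    (hγc : ContinuousOn γ (Ici 0)) (hγnn : ∀ s ≥ (0:ℝ), 0 ≤ γ s)
    (hV' : ∀ t ≥ (0:ℝ), V' t ≤ -ρ (W t))
    (hW' : ∀ t ≥ (0:ℝ), W' t ≤ γ (V t)) :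
    Tendsto W atTop (nhds 0) :=
  stmt14_general V W V' W' ρ γ hVnn hWnn hVd hWd hρc hρmono hρ0 hρpos hγc hV' hW'
end

section
/- Suppose V, W : ℝ≥0 → ℝ≥0 are differentiable, ρ : ℝ≥0 → ℝ≥0 is continuous and positive definite, γ, ζ : ℝ≥0 → ℝ≥0 are continuous, V'(t) ≤ -ρ(W(t)), W'(t) ≥ -γ(V(t)), and W(t) ≤ ζ(V(t)) for all t ≥ 0. Then W(t) → 0 as t → ∞. -/
/-!
Since `V' ≤ -ρ(W) ≤ 0`, `V` decreases and stays in `[0, V 0]`; on that compact range `γ` and `ζ`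
are bounded, so `W' ≥ -M` and `W ≤ B`. If `W t ≥ ε`, the lower bound on `W'` keeps `W ≥ ε / 2`
on a window `[t, t + L]` whose length depends only on `ε` and `M`, and there `ρ(W)` is at least
the positive minimum `δ` of `ρ` on `[ε / 2, B]`; so `V` drops by `δ L` across the window. As `V`
converges, these drops eventually become impossible.
-/

open Filter Set Topology

lemma mul_sub_le_sub_of_hasDerivAt {f f' : ℝ → ℝ} {a b C : ℝ} (hab : a ≤ b)
    (hf : ∀ t ∈ Icc a b, HasDerivAt f (f' t) t) (hC : ∀ t ∈ Icc a b, C ≤ f' t) :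
    C * (b - a) ≤ f b - f a := by
  refine (convex_Icc a b).mul_sub_le_image_sub_of_le_deriv
    (fun t ht => (hf t ht).continuousAt.continuousWithinAt)
    (fun t ht => (hf t (interior_subset ht)).differentiableAt.differentiableWithinAt)
    (fun t ht => ?_) a (left_mem_Icc.2 hab) b (right_mem_Icc.2 hab) hab
  rw [(hf t (interior_subset ht)).deriv]
  exact hC t (interior_subset ht)

lemma sub_le_mul_sub_of_hasDerivAt {f f' : ℝ → ℝ} {a b C : ℝ} (hab : a ≤ b)
    (hf : ∀ t ∈ Icc a b, HasDerivAt f (f' t) t) (hC : ∀ t ∈ Icc a b, f' t ≤ C) :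
    f b - f a ≤ C * (b - a) := by
  have := mul_sub_le_sub_of_hasDerivAt (f := fun t => -f t) hab (fun t ht => (hf t ht).neg)
    (fun t ht => neg_le_neg (hC t ht))
  linarith

lemma AntitoneOn.exists_tendsto_atTop {V : ℝ → ℝ} {a : ℝ} (hV : AntitoneOn V (Ici a))
    (hbdd : BddBelow (V '' Ici a)) : ∃ ℓ, Tendsto V atTop (𝓝 ℓ) := by
  have hanti : Antitone fun t => V (max t a) := fun x y hxy =>
    hV (le_max_right x a) (le_max_right y a) (max_le_max hxy le_rfl)
  obtain ⟨m, hm⟩ := hbdd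
  have hbdd' : BddBelow (range fun t => V (max t a)) :=
    ⟨m, forall_mem_range.2 fun t => hm ⟨max t a, le_max_right t a, rfl⟩⟩
  refine ⟨_, (tendsto_atTop_ciInf hanti hbdd').congr' ?_⟩
  filter_upwards [eventually_ge_atTop a] with t ht
  rw [max_eq_left ht]

theorem tendsto_zero_of_deriv_le_neg_comp {V W V' W' ρ : ℝ → ℝ} {M B : ℝ}
    (hVanti : AntitoneOn V (Ici 0)) (hVnn : ∀ t ≥ (0:ℝ), 0 ≤ V t)
    (hWnn : ∀ t ≥ (0:ℝ), 0 ≤ W t) (hWB : ∀ t ≥ (0:ℝ), W t ≤ B)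
    (hVd : ∀ t ≥ (0:ℝ), HasDerivAt V (V' t) t) (hWd : ∀ t ≥ (0:ℝ), HasDerivAt W (W' t) t)
    (hρc : ContinuousOn ρ (Ici 0)) (hρpos : ∀ s > (0:ℝ), 0 < ρ s)
    (hV' : ∀ t ≥ (0:ℝ), V' t ≤ -ρ (W t)) (hW' : ∀ t ≥ (0:ℝ), -M ≤ W' t) :
    Tendsto W atTop (𝓝 0) := by
  refine tendsto_order.2 ⟨fun a ha => ?_, fun ε hε => ?_⟩
  · filter_upwards [eventually_ge_atTop 0] with t ht
    exact ha.trans_le (hWnn t ht)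
  obtain ⟨δ, hδ, hρδ⟩ := (isCompact_Icc (a := ε / 2) (b := B)).exists_forall_le' (a := 0)
    (hρc.mono fun s hs => (half_pos hε).le.trans hs.1)
    (fun s hs => hρpos s ((half_pos hε).trans_le hs.1))
  obtain ⟨L, hL, hML⟩ := exists_pos_mul_lt (half_pos hε) (max M 0)
  have hdrop : ∀ t ≥ (0:ℝ), ε ≤ W t → δ * L ≤ V t - V (t + L) := by
    intro t ht hεW
    have hWwindow : ∀ s ∈ Icc t (t + L), ε / 2 ≤ W s := by
      intro s hs
      have hW := mul_sub_le_sub_of_hasDerivAt hs.1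
        (fun u hu => hWd u (ht.trans hu.1)) (fun u hu => hW' u (ht.trans hu.1))
      have : M * (s - t) ≤ ε / 2 := calc
        M * (s - t) ≤ max M 0 * (s - t) :=
          mul_le_mul_of_nonneg_right (le_max_left M 0) (by linarith [hs.1])
        _ ≤ max M 0 * L := mul_le_mul_of_nonneg_left (by linarith [hs.2]) (le_max_right M 0)
        _ ≤ ε / 2 := hML.le
      linarith
    have hV := sub_le_mul_sub_of_hasDerivAt (le_add_of_nonneg_right hL.le)
      (fun s hs => hVd s (ht.trans hs.1)) (fun s hs => (hV' s (ht.trans hs.1)).trans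
        (neg_le_neg (hρδ (W s) ⟨hWwindow s hs, hWB s (ht.trans hs.1)⟩)))
    linarith
  obtain ⟨ℓ, hℓ⟩ := hVanti.exists_tendsto_atTop ⟨0, forall_mem_image.2 hVnn⟩
  have hVL : Tendsto (fun t => V t - V (t + L)) atTop (𝓝 0) := by
    simpa using hℓ.sub (hℓ.comp (tendsto_atTop_add_const_right atTop L tendsto_id))
  filter_upwards [eventually_ge_atTop 0, hVL.eventually (gt_mem_nhds (mul_pos hδ hL))]
    with t ht hsmall
  by_contra! hεW
  linarith [hdrop t ht hεW]

theorem stmt15_general (V W V' W' ρ γ ζ : ℝ → ℝ)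
    (hVnn : ∀ t ≥ (0:ℝ), 0 ≤ V t) (hWnn : ∀ t ≥ (0:ℝ), 0 ≤ W t)
    (hVd : ∀ t ≥ (0:ℝ), HasDerivAt V (V' t) t)
    (hWd : ∀ t ≥ (0:ℝ), HasDerivAt W (W' t) t)
    (hρc : ContinuousOn ρ (Ici 0))
    (hρ0 : ρ 0 = 0) (hρpos : ∀ s > (0:ℝ), 0 < ρ s)
    (hγc : ContinuousOn γ (Ici 0))
    (hζc : ContinuousOn ζ (Ici 0))
    (hV' : ∀ t ≥ (0:ℝ), V' t ≤ -ρ (W t))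
    (hW' : ∀ t ≥ (0:ℝ), W' t ≥ -γ (V t))
    (hWζ : ∀ t ≥ (0:ℝ), W t ≤ ζ (V t)) :
    Tendsto W atTop (nhds 0) := by
  have hρnn : ∀ s ≥ (0:ℝ), 0 ≤ ρ s := fun s hs =>
    hs.eq_or_lt.elim (fun h => h ▸ hρ0.ge) (fun h => (hρpos s h).le)
  have hVanti : AntitoneOn V (Ici 0) := fun x hx y hy hxy => by
    have := sub_le_mul_sub_of_hasDerivAt hxy (fun t ht => hVd t (hx.trans ht.1))
      (fun t ht => (hV' t (hx.trans ht.1)).trans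
        (neg_nonpos.2 (hρnn _ (hWnn t (hx.trans ht.1)))))
    linarith
  have hVrange : ∀ t ≥ (0:ℝ), V t ∈ Icc 0 (V 0) := fun t ht =>
    ⟨hVnn t ht, hVanti self_mem_Ici ht ht⟩
  obtain ⟨M, hM⟩ := isCompact_Icc.bddAbove_image (hγc.mono fun s hs => hs.1 : ContinuousOn γ (Icc 0 (V 0)))
  obtain ⟨B, hB⟩ := isCompact_Icc.bddAbove_image (hζc.mono fun s hs => hs.1 : ContinuousOn ζ (Icc 0 (V 0)))
  exact tendsto_zero_of_deriv_le_neg_comp hVanti hVnn hWnn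
    (fun t ht => (hWζ t ht).trans (hB (mem_image_of_mem ζ (hVrange t ht)))) hVd hWd hρc hρpos
    hV' (fun t ht => (neg_le_neg (hM (mem_image_of_mem γ (hVrange t ht)))).trans (hW' t ht))

/-- Scalar core of Theorem 2 (case (2.10) with bound (2.11)): if `V' ≤ -ρ(W)`,
`W' ≥ -γ(V)` and `W ≤ ζ(V)` with `ρ` continuous positive definite and `γ, ζ` continuous
(nonnegative), then `W(t) → 0` as `t → ∞`. -/
theorem stmt15 (V W V' W' ρ γ ζ : ℝ → ℝ)
    (hVnn : ∀ t ≥ (0:ℝ), 0 ≤ V t) (hWnn : ∀ t ≥ (0:ℝ), 0 ≤ W t)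
    (hVd : ∀ t ≥ (0:ℝ), HasDerivAt V (V' t) t)
    (hWd : ∀ t ≥ (0:ℝ), HasDerivAt W (W' t) t)
    (hρc : ContinuousOn ρ (Ici 0))
    (hρ0 : ρ 0 = 0) (hρpos : ∀ s > (0:ℝ), 0 < ρ s)
    (hγc : ContinuousOn γ (Ici 0)) (hγnn : ∀ s ≥ (0:ℝ), 0 ≤ γ s)
    (hζc : ContinuousOn ζ (Ici 0)) (hζnn : ∀ s ≥ (0:ℝ), 0 ≤ ζ s)
    (hV' : ∀ t ≥ (0:ℝ), V' t ≤ -ρ (W t))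
    (hW' : ∀ t ≥ (0:ℝ), W' t ≥ -γ (V t))
    (hWζ : ∀ t ≥ (0:ℝ), W t ≤ ζ (V t)) :
    Tendsto W atTop (nhds 0) :=
  stmt15_general V W V' W' ρ γ ζ hVnn hWnn hVd hWd hρc hρ0 hρpos hγc hζc hV' hW' hWζ
end

section
/- Let f, g, φ : ℝⁿ → ℝⁿ/ℝᵖ define the adaptive closed loop ẏ = f(y) + g(y)(k(y) - Lμ(y)(∇P(y)g(y)) - φ(y)ᵀz), ż = γ⁻¹(∇P(y)g(y))φ(y), under assumptions (H) and (A) below. Then along any solution, the function t ↦ P(y(t) ) satisfies d/dt P(y(t)) ≤ -½ Q(y(t)) whenever (y(t), z(t)) lies in Ω := {(y,z) : P(y) + (γ/2)|z|² ≤ γL}. -/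
open scoped RealInnerProductSpace

/-! Along the closed loop, `d/dt P(y) = ⟪∇P, f⟫ + a k - Lμ a² - a ⟪φ, z⟫` with `a = ⟪∇P, g⟫`.
By (H) the first two terms are at most `-Q`. On `Ω` we have `‖z‖² ≤ 2L` because `P ≥ 0`, so by
(A) `⟪φ, z⟫² ≤ 2(Lμ)Q`, and Young's inequality absorbs the cross term:
`|a ⟪φ, z⟫| ≤ Lμ a² + Q/2`. -/

theorem HasGradientAt.comp_hasDerivAt {F : Type*} [NormedAddCommGroup F]
    [InnerProductSpace ℝ F] [CompleteSpace F] {P : F → ℝ} {P' : F} {y : ℝ → F} {y' : F}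
    {t : ℝ} (hP : HasGradientAt P P' (y t)) (hy : HasDerivAt y y' t) :
    HasDerivAt (fun s => P (y s)) ⟪P', y'⟫ t := by
  have := hP.hasFDerivAt.comp_hasDerivAt t hy
  simp only [InnerProductSpace.toDual_apply_apply] at this
  exact this

theorem abs_mul_le_of_sq_le {m q a c : ℝ} (hm : 0 < m) (hc : c ^ 2 ≤ 2 * m * q) :
    |a * c| ≤ m * a ^ 2 + q / 2 := by
  rw [abs_mul, ← sq_abs a]
  rw [← sq_abs c] at hc
  have h4 : 0 ≤ 4 * m * (m * |a| ^ 2 + q / 2 - |a| * |c|) := by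
    nlinarith [sq_nonneg (2 * m * |a| - |c|)]
  nlinarith [(mul_nonneg_iff_of_pos_left (by positivity : (0 : ℝ) < 4 * m)).mp h4]

theorem stmt17_general {n p : ℕ}
    (f g : EuclideanSpace ℝ (Fin n) → EuclideanSpace ℝ (Fin n))
    (φv : EuclideanSpace ℝ (Fin n) → EuclideanSpace ℝ (Fin p))
    (k : EuclideanSpace ℝ (Fin n) → ℝ)
    (P Q μ : EuclideanSpace ℝ (Fin n) → ℝ)
    (gradP : EuclideanSpace ℝ (Fin n) → EuclideanSpace ℝ (Fin n))
    (γ L : ℝ) (hγ : 0 < γ) (hL : 0 < L)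
    -- Assumption (H)
    (hgrad : ∀ y, HasGradientAt P (gradP y) y)
    (hPnn : ∀ y, 0 ≤ P y)
    (hQnn : ∀ y, 0 ≤ Q y)
    (hH : ∀ y, ⟪gradP y, f y⟫ + ⟪gradP y, g y⟫ * k y ≤ -Q y)
    -- Assumption (A)
    (hμpos : ∀ y, 0 < μ y)
    (hA : ∀ y, ‖φv y‖ ^ 2 ≤ μ y * Q y)
    -- a solution of the closed-loop system (3.9)
    (y : ℝ → EuclideanSpace ℝ (Fin n)) (z : ℝ → EuclideanSpace ℝ (Fin p))
    (hy : ∀ t : ℝ, HasDerivAt y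
      (f (y t) + (k (y t) - L * μ (y t) * ⟪gradP (y t), g (y t)⟫
        - ⟪φv (y t), z t⟫) • g (y t)) t) :
    ∀ t : ℝ, P (y t) + (γ / 2) * ‖z t‖ ^ 2 ≤ γ * L →
      ∃ d : ℝ, HasDerivAt (fun s => P (y s)) d t ∧ d ≤ -(1 / 2) * Q (y t) := by
  intro t hΩ
  refine ⟨_, (hgrad (y t)).comp_hasDerivAt (hy t), ?_⟩
  set a := ⟪gradP (y t), g (y t)⟫
  set c := ⟪φv (y t), z t⟫
  have hz : ‖z t‖ ^ 2 ≤ 2 * L := by nlinarith [hPnn (y t)]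
  have hc : c ^ 2 ≤ 2 * (L * μ (y t)) * Q (y t) :=
    calc c ^ 2 ≤ ‖φv (y t)‖ ^ 2 * ‖z t‖ ^ 2 := by
          rw [← mul_pow, ← sq_abs]; gcongr; exact abs_real_inner_le_norm _ _
      _ ≤ μ (y t) * Q (y t) * (2 * L) :=
          mul_le_mul (hA (y t)) hz (sq_nonneg _) (mul_nonneg (hμpos _).le (hQnn _))
      _ = 2 * (L * μ (y t)) * Q (y t) := by ring
  have hcross := abs_mul_le_of_sq_le (a := a) (mul_pos hL (hμpos (y t))) hc
  calc ⟪gradP (y t), f (y t) + (k (y t) - L * μ (y t) * a - c) • g (y t)⟫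
      = (⟪gradP (y t), f (y t)⟫ + a * k (y t)) - L * μ (y t) * a ^ 2 + -(a * c) := by
        rw [inner_add_right, real_inner_smul_right]; ring
    _ ≤ -Q (y t) - L * μ (y t) * a ^ 2 + |a * c| := by
        gcongr
        exacts [hH (y t), neg_le_abs _]
    _ ≤ -(1 / 2) * Q (y t) := by linarith

/-- Key estimate (5.32) in the proof of Theorem 3 (semiglobal UAOS through adaptive
control): under Assumptions (H) and (A), along any solution of the modified adaptive
closed loop, `d/dt P(y(t)) ≤ -½ Q(y(t))` whenever `(y(t), z(t)) ∈ Ω`, where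
`Ω = {(y,z) : P(y) + (γ/2)|z|² ≤ γL}`. -/
theorem stmt17 {n p : ℕ}
    (f g : EuclideanSpace ℝ (Fin n) → EuclideanSpace ℝ (Fin n))
    (φv : EuclideanSpace ℝ (Fin n) → EuclideanSpace ℝ (Fin p))
    (k : EuclideanSpace ℝ (Fin n) → ℝ)
    (P Q μ : EuclideanSpace ℝ (Fin n) → ℝ)
    (gradP : EuclideanSpace ℝ (Fin n) → EuclideanSpace ℝ (Fin n))
    (γ L : ℝ) (hγ : 0 < γ) (hL : 0 < L)
    -- regularity of the data
    (hfL : LocallyLipschitz f) (hgL : LocallyLipschitz g) (hφL : LocallyLipschitz φv)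
    (hf0 : f 0 = 0) (hφ0 : φv 0 = 0)
    -- Assumption (H)
    (hP2 : ContDiff ℝ 2 P) (hgrad : ∀ y, HasGradientAt P (gradP y) y)
    (hPnn : ∀ y, 0 ≤ P y) (hP0 : P 0 = 0)
    (hPpos : ∀ y, y ≠ 0 → 0 < P y)
    (hPrad : ∀ M : ℝ, ∃ r : ℝ, ∀ y, r < ‖y‖ → M < P y)
    (hQ1 : ContDiff ℝ 1 Q) (hQnn : ∀ y, 0 ≤ Q y) (hQ0 : Q 0 = 0)
    (hQpos : ∀ y, y ≠ 0 → 0 < Q y)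
    (hkL : LocallyLipschitz k) (hk0 : k 0 = 0)
    (hH : ∀ y, ⟪gradP y, f y⟫ + ⟪gradP y, g y⟫ * k y ≤ -Q y)
    -- Assumption (A)
    (hμL : LocallyLipschitz μ) (hμpos : ∀ y, 0 < μ y)
    (hA : ∀ y, ‖φv y‖ ^ 2 ≤ μ y * Q y)
    -- a solution of the closed-loop system (3.9)
    (y : ℝ → EuclideanSpace ℝ (Fin n)) (z : ℝ → EuclideanSpace ℝ (Fin p))
    (hy : ∀ t : ℝ, HasDerivAt y
      (f (y t) + (k (y t) - L * μ (y t) * ⟪gradP (y t), g (y t)⟫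
        - ⟪φv (y t), z t⟫) • g (y t)) t)
    (hz : ∀ t : ℝ, HasDerivAt z
      ((γ⁻¹ * ⟪gradP (y t), g (y t)⟫) • φv (y t)) t) :
    ∀ t : ℝ, P (y t) + (γ / 2) * ‖z t‖ ^ 2 ≤ γ * L →
      ∃ d : ℝ, HasDerivAt (fun s => P (y s)) d t ∧ d ≤ -(1 / 2) * Q (y t) :=
  stmt17_general f g φv k P Q μ gradP γ L hγ hL hgrad hPnn hQnn hH hμpos hA y z hy
end
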